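/- arXiv:1201.1870 — 7 statements merged into one kernel-verified Lean document; each statement's English description precedes it below -/
import Mathlib

section
/- Let G1 and G2 be connected graphs with V(G1) ∩ V(G2) = {v}, and let G be their union. Let T ⊆ V(G) with |T| even, and for i = 1,2 let T_i be whichever of (T ∩ V(G_i)) \ {v} and (T ∩ V(G_i)) ∪ {v} has even cardinality. Then the minimum size of a connected-T-join of G equals the minimum size of a connected-T1-join of G1 plus the minimum size of a connected-T2-join of G2. -/
/-!
Cutting a connected `T`-join of `G` along the cut vertex `v` gives connected joins of `G₁` and
`G₂` whose odd-degree sets agree with `T` away from `v`; since every multigraph has an even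
number of odd-degree vertices, these sets are exactly `T₁` and `T₂`. Conversely, the union of a
connected `T₁`-join and a connected `T₂`-join is a connected `T`-join. All three optima are
attained: a connected graph has a `T`-join for every even `T` (a sum of paths, taken mod 2), and
using every remaining edge twice makes it connected.
-/

open Finset
open scoped Classical

/-- A multigraph on vertex type `V` with edge index type `E`, no loops. -/
structure MGraph (V E : Type) where
  ends : E → Sym2 V
  not_loop : ∀ e, ¬ (ends e).IsDiag

namespace MGraph

variable {V E : Type} [Fintype V] [Fintype E] [DecidableEq V] [DecidableEq E]

/-- Reachability in the multi-subgraph of `2G` given by multiplicities `m`. -/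
def Reach (G : MGraph V E) (m : E → ℕ) : V → V → Prop :=
  Relation.ReflTransGen (fun a b => ∃ e, 1 ≤ m e ∧ G.ends e = s(a, b))

/-- The multi-subgraph given by multiplicities `m` is spanning and connected. -/
def Conn (G : MGraph V E) (m : E → ℕ) : Prop := ∀ u v : V, G.Reach m u v

/-- Degree of `v` in the multi-subgraph with multiplicities `m`. -/
noncomputable def deg (G : MGraph V E) (m : E → ℕ) (v : V) : ℕ :=
  ∑ e, if v ∈ G.ends e then m e else 0

/-- Number of edges (with multiplicity). -/
def size (m : E → ℕ) : ℕ := ∑ e, m e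

/-- `m` is a multi-subgraph of `2G`. -/
def Sub2 (m : E → ℕ) : Prop := ∀ e, m e ≤ 2

/-- The multi-subgraph `m` is 2-edge-connected: at least two vertices, connected,
and still connected after removing any one edge copy. -/
def TwoEC (G : MGraph V E) (m : E → ℕ) : Prop :=
  2 ≤ Fintype.card V ∧ G.Conn m ∧
    ∀ e, 1 ≤ m e → G.Conn (Function.update m e (m e - 1))

/-- A tour of `G`: a spanning connected multi-subgraph of `2G` with all degrees even. -/
def IsTour (G : MGraph V E) (m : E → ℕ) : Prop :=
  Sub2 m ∧ G.Conn m ∧ ∀ v, Even (G.deg m v)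

/-- A connected-`T`-join of `G`: a `T`-join in `2G` that is spanning and connected. -/
def IsConnTJoin (G : MGraph V E) (T : Finset V) (m : E → ℕ) : Prop :=
  Sub2 m ∧ G.Conn m ∧ ∀ v, (v ∈ T ↔ Odd (G.deg m v))

/-- `G` itself is connected. -/
def Connected (G : MGraph V E) : Prop := G.Conn (fun _ => 1)

/-- `G` itself is 2-edge-connected. -/
def TwoEdgeConnected (G : MGraph V E) : Prop := G.TwoEC (fun _ => 1)

/-- The minimum size of a connected-`T`-join of the subgraph of `G` with vertex set
`A` and edge set `Es` (edges outside `Es` get multiplicity zero; connectivity is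
required among the vertices of `A`). -/
noncomputable def optCTJrel (G : MGraph V E) (A : Finset V) (Es : Finset E)
    (T : Finset V) : ℕ :=
  sInf {n | ∃ m : E → ℕ, Sub2 m ∧ (∀ e ∉ Es, m e = 0) ∧
    (∀ u ∈ A, ∀ v ∈ A, G.Reach m u v) ∧
    (∀ v, v ∈ T ↔ Odd (G.deg m v)) ∧ size m = n}

end MGraph

namespace Finset

variable {α : Type*} [DecidableEq α]

theorem eq_of_even_card_of_forall_ne {A B : Finset α} (v : α) (hA : Even #A) (hB : Even #B)
    (h : ∀ x ≠ v, x ∈ A ↔ x ∈ B) : A = B := by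
  have herase : A.erase v = B.erase v := by
    ext x
    by_cases hx : x = v <;> simp [hx, h]
  have hv : v ∈ A ↔ v ∈ B := by
    have hcard := congrArg card herase
    rw [card_erase_eq_ite, card_erase_eq_ite] at hcard
    rw [Nat.even_iff] at hA hB
    split_ifs at hcard with hvA hvB hvB
    · exact iff_of_true hvA hvB
    · have := card_pos.2 ⟨v, hvA⟩; omega
    · have := card_pos.2 ⟨v, hvB⟩; omega
    · exact iff_of_false hvA hvB
  ext x
  by_cases hx : x = v
  · exact hx ▸ hv
  · exact h x hx

theorem mem_iff_of_ne_of_eq_sdiff_or_eq_union {T A S : Finset α} {v : α}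
    (h : S = (T ∩ A) \ {v} ∨ S = (T ∩ A) ∪ {v}) : ∀ x ≠ v, x ∈ S ↔ x ∈ T ∧ x ∈ A := by
  intro x hx
  rcases h with rfl | rfl <;> simp [hx]

end Finset

namespace MGraph

variable {V E : Type} {G : MGraph V E}

theorem reach_mono {m m' : E → ℕ} (h : m ≤ m') {u w : V} (hr : G.Reach m u w) :
    G.Reach m' u w :=
  Relation.ReflTransGen.mono (fun _ _ ⟨e, he, hends⟩ => ⟨e, he.trans (h e), hends⟩) _ _ hr

variable [DecidableEq V]

theorem card_filter_mem_ends [Fintype V] (e : E) : #{x | x ∈ G.ends e} = 2 := by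
  rw [← Sym2.card_toFinset_of_not_isDiag _ (G.not_loop e)]
  congr 1
  ext x
  simp [Sym2.mem_toFinset]

variable [Fintype E]

theorem deg_add (m m' : E → ℕ) (x : V) : G.deg (m + m') x = G.deg m x + G.deg m' x := by
  simp only [deg, Pi.add_apply, ← sum_add_distrib]
  exact sum_congr rfl fun e _ => by split_ifs <;> rfl

theorem deg_sum {ι : Type*} (s : Finset ι) (f : ι → E → ℕ) (x : V) :
    G.deg (∑ i ∈ s, f i) x = ∑ i ∈ s, G.deg (f i) x := by
  simp only [deg, Finset.sum_apply]
  rw [sum_comm]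
  exact sum_congr rfl fun e _ => by split_ifs <;> simp

theorem size_add (m m' : E → ℕ) : size (m + m') = size m + size m' :=
  sum_add_distrib

theorem size_indicator (Es : Finset E) (m : E → ℕ) :
    size ((Es : Set E).indicator m) = ∑ e ∈ Es, m e :=
  sum_indicator_subset m (subset_univ Es)

theorem deg_eq_zero_of_notMem {A : Finset V} {Es : Finset E}
    (hEs : ∀ e ∈ Es, ∀ x ∈ G.ends e, x ∈ A) {m : E → ℕ} (hm : ∀ e ∉ Es, m e = 0) {x : V}
    (hx : x ∉ A) : G.deg m x = 0 :=
  sum_eq_zero fun e _ => by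
    split_ifs with hxe
    · exact hm e fun he => hx (hEs e he x hxe)
    · rfl

section Handshake

variable [Fintype V]

theorem sum_deg (m : E → ℕ) : ∑ x, G.deg m x = 2 * size m := by
  simp only [deg, size]
  rw [sum_comm, mul_sum]
  refine sum_congr rfl fun e _ => ?_
  rw [← sum_filter, sum_const, card_filter_mem_ends, smul_eq_mul]

theorem even_card_filter_odd_deg (m : E → ℕ) : Even #{x | Odd (G.deg m x)} :=
  (even_sum_iff_even_card_odd _).1 ⟨size m, by rw [sum_deg]; ring⟩

theorem mem_iff_odd_deg_of_forall_ne {T : Finset V} {m : E → ℕ} (v : V) (hT : Even #T)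
    (h : ∀ x ≠ v, x ∈ T ↔ Odd (G.deg m x)) (x : V) : x ∈ T ↔ Odd (G.deg m x) := by
  rw [eq_of_even_card_of_forall_ne v hT (G.even_card_filter_odd_deg m) (by simpa using h)]
  simp

end Handshake

structure IsConnJoinOn (G : MGraph V E) (A : Finset V) (Es : Finset E) (T : Finset V)
    (m : E → ℕ) : Prop where
  sub2 : Sub2 m
  support : ∀ e ∉ Es, m e = 0
  reach : ∀ u ∈ A, ∀ w ∈ A, G.Reach m u w
  odd_deg : ∀ x, x ∈ T ↔ Odd (G.deg m x)

theorem IsConnJoinOn.optCTJrel_le [Fintype V] {A : Finset V} {Es : Finset E} {T : Finset V}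
    {m : E → ℕ} (h : G.IsConnJoinOn A Es T m) : G.optCTJrel A Es T ≤ size m :=
  Nat.sInf_le ⟨m, h.1, h.2, h.3, h.4, rfl⟩

theorem IsConnJoinOn.exists_size_eq_optCTJrel [Fintype V] {A : Finset V} {Es : Finset E}
    {T : Finset V} {m : E → ℕ} (h : G.IsConnJoinOn A Es T m) :
    ∃ m', G.IsConnJoinOn A Es T m' ∧ size m' = G.optCTJrel A Es T := by
  obtain ⟨m', h1, h2, h3, h4, hsize⟩ :=
    Nat.sInf_mem (s := {n | ∃ m : E → ℕ, Sub2 m ∧ (∀ e ∉ Es, m e = 0) ∧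
      (∀ u ∈ A, ∀ v ∈ A, G.Reach m u v) ∧ (∀ v, v ∈ T ↔ Odd (G.deg m v)) ∧ size m = n})
      ⟨size m, m, h.1, h.2, h.3, h.4, rfl⟩
  exact ⟨m', ⟨h1, h2, h3, h4⟩, hsize⟩

noncomputable def degParity (G : MGraph V E) (m : E → ℕ) : V → ZMod 2 := fun x => G.deg m x

theorem odd_deg_iff_degParity {m : E → ℕ} {x : V} : Odd (G.deg m x) ↔ G.degParity m x = 1 :=
  ZMod.natCast_eq_one_iff_odd.symm

theorem degParity_add (m m' : E → ℕ) : G.degParity (m + m') = G.degParity m + G.degParity m' :=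
  funext fun x => by simp [degParity, deg_add]

theorem degParity_sum {ι : Type*} (s : Finset ι) (f : ι → E → ℕ) :
    G.degParity (∑ i ∈ s, f i) = ∑ i ∈ s, G.degParity (f i) :=
  funext fun x => by simp [degParity, deg_sum]

theorem degParity_congr {m m' : E → ℕ} (h : ∀ e, m e % 2 = m' e % 2) :
    G.degParity m = G.degParity m' :=
  funext fun x => by
    simp only [degParity, deg, Nat.cast_sum]
    exact sum_congr rfl fun e _ => by
      split_ifs <;> simp [(ZMod.natCast_eq_natCast_iff' _ _ 2).2 (h e)]

variable [DecidableEq E]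

theorem degParity_single {e : E} {b c : V} (hends : G.ends e = s(b, c)) :
    G.degParity (Pi.single e 1) = Pi.single b 1 + Pi.single c 1 := by
  have hbc : b ≠ c := fun h => G.not_loop e (by simp [hends, h])
  ext x
  simp only [degParity, deg, Pi.add_apply]
  rw [sum_eq_single e (fun e' _ he' => by simp [he']) (by simp)]
  by_cases hb : x = b <;> by_cases hc : x = c <;> simp_all [Sym2.mem_iff]

theorem exists_degParity_eq_of_reach {Es : Finset E} {u w : V}
    (h : G.Reach (fun e => if e ∈ Es then 1 else 0) u w) :
    ∃ p : E → ℕ, (∀ e ∉ Es, p e = 0) ∧ G.degParity p = Pi.single u 1 + Pi.single w 1 := by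
  induction h with
  | refl => exact ⟨0, fun _ _ => rfl, by ext; simp [degParity, deg, CharTwo.add_self_eq_zero]⟩
  | @tail b c _ hstep ih =>
    obtain ⟨p, hp, hpar⟩ := ih
    obtain ⟨e, he, hends⟩ := hstep
    have heEs : e ∈ Es := by by_contra h; simp [h] at he
    refine ⟨p + Pi.single e 1, fun e' he' => ?_, ?_⟩
    · simp [hp e' he', ne_of_mem_of_not_mem heEs he' |>.symm]
    · rw [degParity_add, hpar, degParity_single hends]
      ext x
      simp only [Pi.add_apply]
      rw [add_assoc, ← add_assoc (Pi.single b 1 x), CharTwo.add_self_eq_zero, zero_add]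

-- Join paths from a fixed `r ∈ S` to every `x ∈ S`: the `#S` contributions at `r` cancel.
theorem exists_degParity_eq_sum_single {Es : Finset E} {A S : Finset V}
    (hc : ∀ u ∈ A, ∀ w ∈ A, G.Reach (fun e => if e ∈ Es then 1 else 0) u w)
    (hSA : S ⊆ A) (hS : Even #S) :
    ∃ j : E → ℕ, (∀ e ∉ Es, j e = 0) ∧ G.degParity j = ∑ x ∈ S, Pi.single x 1 := by
  rcases S.eq_empty_or_nonempty with rfl | ⟨r, hr⟩
  · exact ⟨0, fun _ _ => rfl, by ext; simp [degParity, deg]⟩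
  have hpaths : ∀ x ∈ S, ∃ p : E → ℕ,
      (∀ e ∉ Es, p e = 0) ∧ G.degParity p = Pi.single r 1 + Pi.single x 1 :=
    fun x hx => exists_degParity_eq_of_reach (hc r (hSA hr) x (hSA hx))
  choose! p hp hpar using hpaths
  refine ⟨∑ x ∈ S, p x, fun e he => by simpa using fun x hx => hp x hx e he, ?_⟩
  rw [degParity_sum, sum_congr rfl hpar, sum_add_distrib, sum_const,
    ← Nat.cast_smul_eq_nsmul (ZMod 2), ZMod.natCast_eq_zero_iff_even.2 hS, zero_smul, zero_add]

theorem exists_isConnJoinOn {Es : Finset E} {A S : Finset V}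
    (hc : ∀ u ∈ A, ∀ w ∈ A, G.Reach (fun e => if e ∈ Es then 1 else 0) u w)
    (hSA : S ⊆ A) (hS : Even #S) : ∃ m, G.IsConnJoinOn A Es S m := by
  obtain ⟨j, hj, hpar⟩ := exists_degParity_eq_sum_single hc hSA hS
  let m : E → ℕ := fun e => if e ∈ Es then (if Even (j e) then 2 else 1) else 0
  refine ⟨m, fun e => ?_, fun e he => if_neg he, fun u hu w hw => ?_, fun x => ?_⟩
  · dsimp only [m]
    split_ifs <;> omega
  · refine reach_mono (fun e => ?_) (hc u hu w hw)
    dsimp only [m]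
    split_ifs <;> omega
  · have hmj : G.degParity m = G.degParity j := degParity_congr fun e => by
      dsimp only [m]
      split_ifs with he hj2
      · rw [Nat.even_iff] at hj2; omega
      · rw [Nat.not_even_iff] at hj2; omega
      · simp [hj e he]
    rw [odd_deg_iff_degParity, hmj, hpar, Finset.sum_apply, sum_pi_single]
    split_ifs <;> simp [*]

section OneSum

variable [Fintype V] {V1 V2 : Finset V} {E1 E2 : Finset E} {v : V}

structure IsOneSum (G : MGraph V E) (V1 V2 : Finset V) (E1 E2 : Finset E) (v : V) : Prop where
  vert_union : V1 ∪ V2 = univ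
  vert_inter : V1 ∩ V2 = {v}
  edge_union : E1 ∪ E2 = univ
  edge_disjoint : Disjoint E1 E2
  ends_left : ∀ e ∈ E1, ∀ x ∈ G.ends e, x ∈ V1
  ends_right : ∀ e ∈ E2, ∀ x ∈ G.ends e, x ∈ V2

namespace IsOneSum

theorem symm (hG : G.IsOneSum V1 V2 E1 E2 v) : G.IsOneSum V2 V1 E2 E1 v :=
  ⟨union_comm V1 V2 ▸ hG.vert_union, inter_comm V1 V2 ▸ hG.vert_inter,
    union_comm E1 E2 ▸ hG.edge_union, hG.edge_disjoint.symm, hG.ends_right, hG.ends_left⟩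

theorem mem_left (hG : G.IsOneSum V1 V2 E1 E2 v) : v ∈ V1 :=
  (mem_inter.1 (hG.vert_inter ▸ mem_singleton_self v)).1

theorem eq_of_mem_of_mem (hG : G.IsOneSum V1 V2 E1 E2 v) {x : V} (h1 : x ∈ V1) (h2 : x ∈ V2) :
    x = v :=
  mem_singleton.1 (hG.vert_inter ▸ mem_inter.2 ⟨h1, h2⟩)

theorem mem_or_mem (hG : G.IsOneSum V1 V2 E1 E2 v) (x : V) : x ∈ V1 ∨ x ∈ V2 :=
  mem_union.1 (hG.vert_union ▸ mem_univ x)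

theorem mem_or_mem_edge (hG : G.IsOneSum V1 V2 E1 E2 v) (e : E) : e ∈ E1 ∨ e ∈ E2 :=
  mem_union.1 (hG.edge_union ▸ mem_univ e)

theorem subset_left (hG : G.IsOneSum V1 V2 E1 E2 v) {T T1 : Finset V}
    (hT1 : ∀ x ≠ v, x ∈ T1 ↔ x ∈ T ∧ x ∈ V1) : T1 ⊆ V1 := fun x hx => by
  by_cases hxv : x = v
  · exact hxv ▸ hG.mem_left
  · exact ((hT1 x hxv).1 hx).2

theorem size_eq_add (hG : G.IsOneSum V1 V2 E1 E2 v) (m : E → ℕ) :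
    size m = size ((E1 : Set E).indicator m) + size ((E2 : Set E).indicator m) := by
  rw [size_indicator, size_indicator, ← sum_union hG.edge_disjoint, hG.edge_union]
  rfl

theorem odd_deg_add_iff_left (hG : G.IsOneSum V1 V2 E1 E2 v) {T T1 : Finset V}
    (hT1 : ∀ x ≠ v, x ∈ T1 ↔ x ∈ T ∧ x ∈ V1) {m1 m2 : E → ℕ}
    (hm1 : G.IsConnJoinOn V1 E1 T1 m1) (hm2 : ∀ e ∉ E2, m2 e = 0) {x : V} (hx : x ∈ V1)
    (hxv : x ≠ v) : Odd (G.deg (m1 + m2) x) ↔ x ∈ T := by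
  have hx2 : x ∉ V2 := fun h => hxv (hG.eq_of_mem_of_mem hx h)
  rw [deg_add, deg_eq_zero_of_notMem hG.ends_right hm2 hx2, add_zero, ← hm1.odd_deg,
    hT1 x hxv, and_iff_left hx]

theorem isConnJoinOn_add (hG : G.IsOneSum V1 V2 E1 E2 v) {T T1 T2 : Finset V} (hT : Even #T)
    (hT1 : ∀ x ≠ v, x ∈ T1 ↔ x ∈ T ∧ x ∈ V1) (hT2 : ∀ x ≠ v, x ∈ T2 ↔ x ∈ T ∧ x ∈ V2)
    {m1 m2 : E → ℕ} (hm1 : G.IsConnJoinOn V1 E1 T1 m1) (hm2 : G.IsConnJoinOn V2 E2 T2 m2) :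
    G.IsConnJoinOn univ univ T (m1 + m2) := by
  refine ⟨fun e => ?_, fun e he => absurd (mem_univ e) he, fun u _ w _ => ?_,
    mem_iff_odd_deg_of_forall_ne v hT fun x hxv => ?_⟩
  · rcases hG.mem_or_mem_edge e with he | he
    · simpa [hm2.support e (disjoint_left.1 hG.edge_disjoint he)] using hm1.sub2 e
    · simpa [hm1.support e (disjoint_right.1 hG.edge_disjoint he)] using hm2.sub2 e
  · have hv : ∀ x, G.Reach (m1 + m2) x v ∧ G.Reach (m1 + m2) v x := fun x => by
      rcases hG.mem_or_mem x with hx | hx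
      · exact ⟨reach_mono le_self_add (hm1.reach x hx v hG.mem_left),
          reach_mono le_self_add (hm1.reach v hG.mem_left x hx)⟩
      · exact ⟨reach_mono le_add_self (hm2.reach x hx v hG.symm.mem_left),
          reach_mono le_add_self (hm2.reach v hG.symm.mem_left x hx)⟩
    exact (hv u).1.trans (hv w).2
  · rcases hG.mem_or_mem x with hx | hx
    · exact (hG.odd_deg_add_iff_left hT1 hm1 hm2.support hx hxv).symm
    · rw [add_comm]
      exact (hG.symm.odd_deg_add_iff_left hT2 hm2 hm1.support hx hxv).symm

-- A walk starting in `V1` can only leave `V1` through `v`.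
theorem reach_indicator_left (hG : G.IsOneSum V1 V2 E1 E2 v) {m : E → ℕ} {u w : V}
    (hu : u ∈ V1) (h : G.Reach m u w) :
    (w ∈ V1 → G.Reach ((E1 : Set E).indicator m) u w) ∧
      (w ∈ V2 → G.Reach ((E1 : Set E).indicator m) u v) := by
  induction h with
  | refl => exact ⟨fun _ => .refl, fun hu2 => hG.eq_of_mem_of_mem hu hu2 ▸ .refl⟩
  | @tail b c _ hstep ih =>
    obtain ⟨e, he, hends⟩ := hstep
    have hb : b ∈ G.ends e := hends ▸ Sym2.mem_mk_left b c
    have hc : c ∈ G.ends e := hends ▸ Sym2.mem_mk_right b c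
    rcases hG.mem_or_mem_edge e with heE | heE
    · have huc : G.Reach ((E1 : Set E).indicator m) u c :=
        (ih.1 (hG.ends_left e heE b hb)).tail
          ⟨e, by rwa [Set.indicator_of_mem (mem_coe.2 heE)], hends⟩
      exact ⟨fun _ => huc, fun hc2 => hG.eq_of_mem_of_mem (hG.ends_left e heE c hc) hc2 ▸ huc⟩
    · have huv := ih.2 (hG.ends_right e heE b hb)
      exact ⟨fun hc1 => hG.eq_of_mem_of_mem hc1 (hG.ends_right e heE c hc) ▸ huv, fun _ => huv⟩

theorem deg_indicator_left (hG : G.IsOneSum V1 V2 E1 E2 v) (m : E → ℕ) {x : V} (hx : x ∉ V2) :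
    G.deg ((E1 : Set E).indicator m) x = G.deg m x :=
  sum_congr rfl fun e _ => by
    split_ifs with hxe
    · refine Set.indicator_of_mem (mem_coe.2 ?_) m
      exact (hG.mem_or_mem_edge e).resolve_right fun he => hx (hG.ends_right e he x hxe)
    · rfl

theorem isConnJoinOn_indicator_left (hG : G.IsOneSum V1 V2 E1 E2 v) {T T1 : Finset V}
    (hT1 : ∀ x ≠ v, x ∈ T1 ↔ x ∈ T ∧ x ∈ V1) (hT1e : Even #T1) {m : E → ℕ}
    (hm : G.IsConnJoinOn univ univ T m) : G.IsConnJoinOn V1 E1 T1 ((E1 : Set E).indicator m) := by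
  refine ⟨fun e => (Set.indicator_le_self _ m e).trans (hm.sub2 e),
    fun e he => Set.indicator_of_notMem (by simpa using he) m,
    fun u hu w hw => (hG.reach_indicator_left hu (hm.reach u (mem_univ u) w (mem_univ w))).1 hw,
    mem_iff_odd_deg_of_forall_ne v hT1e fun x hxv => ?_⟩
  rw [hT1 x hxv]
  by_cases hx : x ∈ V1
  · have hx2 : x ∉ V2 := fun h => hxv (hG.eq_of_mem_of_mem hx h)
    rw [hG.deg_indicator_left m hx2, ← hm.odd_deg, and_iff_left hx]
  · have hzero : ∀ e ∉ E1, (E1 : Set E).indicator m e = 0 :=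
      fun e he => Set.indicator_of_notMem (by simpa using he) m
    rw [deg_eq_zero_of_notMem hG.ends_left hzero hx]
    simp [hx]

end IsOneSum

end OneSum

end MGraph

namespace Graph

open MGraph

theorem stmt_2 {V E : Type} [Fintype V] [Fintype E] [DecidableEq V] [DecidableEq E]
    (G : MGraph V E) (V1 V2 : Finset V) (E1 E2 : Finset E) (v : V)
    (hVu : V1 ∪ V2 = Finset.univ) (hVi : V1 ∩ V2 = {v})
    (hEu : E1 ∪ E2 = Finset.univ) (hEd : Disjoint E1 E2)
    (hE1 : ∀ e ∈ E1, ∀ x ∈ G.ends e, x ∈ V1)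
    (hE2 : ∀ e ∈ E2, ∀ x ∈ G.ends e, x ∈ V2)
    (hc1 : ∀ u ∈ V1, ∀ w ∈ V1, G.Reach (fun e => if e ∈ E1 then 1 else 0) u w)
    (hc2 : ∀ u ∈ V2, ∀ w ∈ V2, G.Reach (fun e => if e ∈ E2 then 1 else 0) u w)
    (T T1 T2 : Finset V) (hT : Even T.card)
    (hT1 : T1 = (T ∩ V1) \ {v} ∨ T1 = (T ∩ V1) ∪ {v}) (hT1e : Even T1.card)
    (hT2 : T2 = (T ∩ V2) \ {v} ∨ T2 = (T ∩ V2) ∪ {v}) (hT2e : Even T2.card) :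
    optCTJrel G Finset.univ Finset.univ T
      = optCTJrel G V1 E1 T1 + optCTJrel G V2 E2 T2 := by
  have hG : G.IsOneSum V1 V2 E1 E2 v := ⟨hVu, hVi, hEu, hEd, hE1, hE2⟩
  have hT1' := mem_iff_of_ne_of_eq_sdiff_or_eq_union hT1
  have hT2' := mem_iff_of_ne_of_eq_sdiff_or_eq_union hT2
  obtain ⟨m1, hm1⟩ := exists_isConnJoinOn hc1 (hG.subset_left hT1') hT1e
  obtain ⟨m2, hm2⟩ := exists_isConnJoinOn hc2 (hG.symm.subset_left hT2') hT2e
  obtain ⟨n1, hn1, hsize1⟩ := hm1.exists_size_eq_optCTJrel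
  obtain ⟨n2, hn2, hsize2⟩ := hm2.exists_size_eq_optCTJrel
  have hn := hG.isConnJoinOn_add hT hT1' hT2' hn1 hn2
  obtain ⟨m, hm, hsize⟩ := hn.exists_size_eq_optCTJrel
  apply le_antisymm
  · calc optCTJrel G univ univ T ≤ size (n1 + n2) := hn.optCTJrel_le
      _ = _ := by rw [size_add, hsize1, hsize2]
  · calc optCTJrel G V1 E1 T1 + optCTJrel G V2 E2 T2
        ≤ size ((E1 : Set E).indicator m) + size ((E2 : Set E).indicator m) :=
          add_le_add (hG.isConnJoinOn_indicator_left hT1' hT1e hm).optCTJrel_le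
            (hG.symm.isConnJoinOn_indicator_left hT2' hT2e hm).optCTJrel_le
      _ = _ := by rw [← hG.size_eq_add, hsize]
end Graph
end

section
/- Let G be a 2-edge-connected graph and T ⊆ V(G) with |T| even. Then the minimum cardinality of a T-join in G is at most (1/2)(|V(G)| + φ(G) - 1), where φ(G) is the minimum number of even-length ears over all ear-decompositions of G. -/
open Finset
open scoped Classical

namespace MGraph

variable {V E : Type} [Fintype V] [Fintype E] [DecidableEq V] [DecidableEq E]

/-- An ear is given by its vertex sequence together with its edge sequence. -/
abbrev Ear (V E : Type) := List V × List E

/-- The list of internal vertices of an ear. -/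
def innList (P : Ear V E) : List V := (P.1.drop 1).dropLast

/-- The set of internal vertices of an ear. -/
def innFinset (P : Ear V E) : Finset V := (innList P).toFinset

/-- `EarOK G prev P`: `P` is a valid ear to attach to the set `prev` of previously
present vertices: consecutive listed vertices are joined by the listed edges, the
(one or two) endpoints lie in `prev`, and the internal vertices are new and distinct. -/
def EarOK (G : MGraph V E) (prev : Set V) (P : Ear V E) : Prop :=
  P.1.length = P.2.length + 1 ∧ P.2 ≠ [] ∧ P.2.Nodup ∧
  (∀ i : ℕ, ∀ h : i < P.2.length, ∃ a b : V,
    P.1[i]? = some a ∧ P.1[i + 1]? = some b ∧ G.ends (P.2.get ⟨i, h⟩) = s(a, b)) ∧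
  (∃ a, P.1.head? = some a ∧ a ∈ prev) ∧
  (∃ b, P.1.getLast? = some b ∧ b ∈ prev) ∧
  (innList P).Nodup ∧
  (∀ x ∈ innList P, x ∉ prev)

/-- The set of vertices present after attaching the given ears to the root `r`. -/
def vertsUpTo (r : V) (ears : List (Ear V E)) : Set V :=
  insert r {x | ∃ P ∈ ears, x ∈ P.1}

/-- `ears` (attached successively to the root `r`) form an ear-decomposition of `G`. -/
def IsEarDecomp (G : MGraph V E) (r : V) (ears : List (Ear V E)) : Prop :=
  (∀ i : ℕ, ∀ h : i < ears.length,
      G.EarOK (vertsUpTo r (ears.take i)) (ears.get ⟨i, h⟩)) ∧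
  vertsUpTo r ears = Set.univ ∧
  (∀ e : E, e ∈ ears.flatMap Prod.snd) ∧
  (ears.flatMap Prod.snd).Nodup

/-- An ear is nontrivial if it has length `> 1`. -/
def Nontriv (P : Ear V E) : Prop := 2 ≤ P.2.length

/-- `Q` is attached to `P` if `Q` has an endpoint among the internal vertices of `P`. -/
def AttachedTo (P Q : Ear V E) : Prop :=
  (∃ a, Q.1.head? = some a ∧ a ∈ innList P) ∨
  (∃ a, Q.1.getLast? = some a ∧ a ∈ innList P)

/-- The `i`-th ear is pendant: nontrivial and no nontrivial ear is attached to it. -/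
def PendantAt (ears : List (Ear V E)) (i : ℕ) (h : i < ears.length) : Prop :=
  Nontriv (ears.get ⟨i, h⟩) ∧
  ∀ j : ℕ, ∀ hj : j < ears.length, j ≠ i → Nontriv (ears.get ⟨j, hj⟩) →
    ¬ AttachedTo (ears.get ⟨i, h⟩) (ears.get ⟨j, hj⟩)

/-- An ear is short if it has length 2 or 3. -/
def ShortEar (P : Ear V E) : Prop := P.2.length = 2 ∨ P.2.length = 3

/-- `φ(G)`: the minimum number of even ears in an ear-decomposition of `G`. -/
noncomputable def phi (G : MGraph V E) : ℕ :=
  sInf {n | ∃ (r : V) (ears : List (Ear V E)), G.IsEarDecomp r ears ∧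
    (ears.countP fun P => decide (Even P.2.length)) = n}

/-- `F` is a `T`-join of `G` (as a plain edge subset of `G`). -/
def IsTJoinF (G : MGraph V E) (T : Finset V) (F : Finset E) : Prop :=
  ∀ v, (v ∈ T ↔ Odd (G.deg (fun e => if e ∈ F then 1 else 0) v))

end MGraph

/-!
Build the `T`-join ear by ear, from the last ear back to the root. The parity demand at the
internal vertices of an ear of length `ℓ` can be met by either of two complementary sets of its
edges, so by at most `⌊ℓ/2⌋` of them; what this does to the two ends of the ear is passed on as
a changed demand to the earlier ears. Since `2⌊ℓ/2⌋ = (ℓ - 1) + [ℓ even]` and the internal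
vertices of the ears partition `V` minus the root, this gives
`2|F| ≤ |V| - 1 + (number of even ears)`. Ear-decompositions exist because in a 2-edge-connected
graph an uncovered edge leaving the covered vertex set continues, without using itself, along a
path that first returns to the covered set.
-/

lemma injective_fin_iff_injOn_Iio {α : Type*} {n : ℕ} {g : ℕ → α} :
    (Function.Injective fun k : Fin n => g k) ↔ Set.InjOn g (Set.Iio n) :=
  ⟨fun h a ha b hb hab => congrArg Fin.val (@h ⟨a, ha⟩ ⟨b, hb⟩ hab),
    fun h a b hab => Fin.ext (h a.2 b.2 hab)⟩

lemma injOn_succ_Iio_iff_injOn_Ioo {α : Type*} {n : ℕ} {g : ℕ → α} :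
    Set.InjOn (fun k => g (k + 1)) (Set.Iio (n - 1)) ↔ Set.InjOn g (Set.Ioo 0 n) := by
  constructor
  · rintro h a ⟨ha0, ha⟩ b ⟨hb0, hb⟩ hab
    have := @h (a - 1) (by simp only [Set.mem_Iio]; omega) (b - 1)
      (by simp only [Set.mem_Iio]; omega)
      (by simpa [Nat.sub_add_cancel ha0, Nat.sub_add_cancel hb0])
    omega
  · intro h a ha b hb hab
    have := @h (a + 1) ⟨by omega, by simp only [Set.mem_Iio] at ha; omega⟩ (b + 1)
      ⟨by omega, by simp only [Set.mem_Iio] at hb; omega⟩ hab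
    omega

lemma List.two_mul_sum_map_div_two {α : Type*} (l : List α) (g : α → ℕ)
    (hg : ∀ a ∈ l, 0 < g a) :
    2 * (l.map fun a => g a / 2).sum =
      (l.map fun a => g a - 1).sum + l.countP (fun a => decide (Even (g a))) := by
  induction l with
  | nil => simp
  | cons a l ih =>
    have ha := hg a List.mem_cons_self
    have hl := ih fun b hb => hg b (List.mem_cons_of_mem a hb)
    simp only [List.map_cons, List.sum_cons, List.countP_cons, decide_eq_true_eq]
    rcases Nat.even_or_odd (g a) with h | h
    · have := Nat.even_iff.1 h
      simp only [h, if_true]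
      omega
    · have := Nat.odd_iff.1 h
      simp only [Nat.not_even_iff_odd.2 h, if_false]
      omega

namespace MGraph

variable {V E : Type} (G : MGraph V E)

section Boundary

noncomputable def boundary (F : Finset E) (v : V) : ZMod 2 :=
  ∑ e ∈ F, if v ∈ G.ends e then 1 else 0

lemma exists_ends_eq (e : E) : ∃ a b, a ≠ b ∧ G.ends e = s(a, b) := by
  induction h : G.ends e using Sym2.ind with
  | h a b => exact ⟨a, b, fun hab => G.not_loop e (h ▸ Sym2.mk_isDiag_iff.2 hab), rfl⟩

lemma boundary_union [DecidableEq E] {F₁ F₂ : Finset E} (h : Disjoint F₁ F₂) (v : V) :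
    G.boundary (F₁ ∪ F₂) v = G.boundary F₁ v + G.boundary F₂ v :=
  sum_union h

lemma boundary_eq_zero {F : Finset E} {v : V} (h : ∀ e ∈ F, v ∉ G.ends e) :
    G.boundary F v = 0 :=
  sum_eq_zero fun e he => if_neg (h e he)

lemma sum_boundary [Fintype V] (F : Finset E) : ∑ v, G.boundary F v = 0 := by
  unfold boundary
  rw [sum_comm]
  refine sum_eq_zero fun e _ => ?_
  obtain ⟨a, b, hab, he⟩ := G.exists_ends_eq e
  have hfilter : univ.filter (· ∈ s(a, b)) = {a, b} := by ext; simp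
  rw [he, sum_boole, hfilter, card_pair hab]
  rfl

lemma isTJoinF_iff [Fintype E] [DecidableEq V] [DecidableEq E] (T : Finset V) (F : Finset E) :
    G.IsTJoinF T F ↔ ∀ v, G.boundary F v = if v ∈ T then 1 else 0 := by
  have hdeg : ∀ v, (G.deg (fun e => if e ∈ F then 1 else 0) v : ZMod 2) = G.boundary F v := by
    intro v
    simp only [deg, boundary, Nat.cast_sum, Nat.cast_ite, Nat.cast_one, Nat.cast_zero]
    conv_rhs => rw [← univ_inter F, ← sum_ite_mem]
    refine sum_congr rfl fun e _ => ?_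
    split_ifs <;> rfl
  refine forall_congr' fun v => ?_
  rw [← ZMod.natCast_eq_one_iff_odd, hdeg]
  by_cases hv : v ∈ T
  · simp [hv]
  · simp only [hv, false_iff, if_false]
    generalize G.boundary F v = x
    revert x; decide

end Boundary

section Path

variable {ℓ : ℕ} {w : ℕ → V} {f : ℕ → E}

lemma boundary_image_path [DecidableEq E] (hends : ∀ k < ℓ, G.ends (f k) = s(w k, w (k + 1)))
    (hf : Set.InjOn f (Set.Iio ℓ)) (hw : ∀ j ∈ Set.Ioo 0 ℓ, ∀ k ≤ ℓ, w k = w j → k = j)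
    {C : Finset ℕ} (hC : C ⊆ range ℓ) {j : ℕ} (hj : j ∈ Set.Ioo 0 ℓ) :
    G.boundary (C.image f) (w j) = (if j - 1 ∈ C then 1 else 0) + (if j ∈ C then 1 else 0) := by
  have hCℓ : ∀ k ∈ C, k < ℓ := fun k hk => mem_range.1 (hC hk)
  have hj0 : 0 < j := hj.1
  have hterm : ∀ k ∈ C, (if w j ∈ G.ends (f k) then (1 : ZMod 2) else 0)
      = (if j - 1 = k then 1 else 0) + (if j = k then 1 else 0) := by
    intro k hk
    replace hk := hCℓ k hk
    have hstart : w j = w k ↔ j = k :=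
      ⟨fun h => (hw j hj k hk.le h.symm).symm, fun h => h ▸ rfl⟩
    have hend : w j = w (k + 1) ↔ j - 1 = k :=
      ⟨fun h => by have := hw j hj (k + 1) hk h.symm; omega,
        fun h => by rw [show k + 1 = j by omega]⟩
    simp only [hends k hk, Sym2.mem_iff, hstart, hend]
    by_cases h : j = k
    · simp [h, show k - 1 ≠ k by omega]
    · by_cases h' : j - 1 = k <;> simp [h, h']
  unfold boundary
  rw [sum_image fun a ha b hb h => hf (hCℓ a ha) (hCℓ b hb) h, sum_congr rfl hterm,
    sum_add_distrib, sum_ite_eq, sum_ite_eq]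

lemma exists_boundary_eq_on_path [DecidableEq E]
    (hends : ∀ k < ℓ, G.ends (f k) = s(w k, w (k + 1)))
    (hf : Set.InjOn f (Set.Iio ℓ)) (hw : ∀ j ∈ Set.Ioo 0 ℓ, ∀ k ≤ ℓ, w k = w j → k = j)
    (t : V → ZMod 2) :
    ∃ C ⊆ range ℓ, (∀ j ∈ Set.Ioo 0 ℓ, G.boundary (C.image f) (w j) = t (w j)) ∧
      2 * C.card ≤ ℓ := by
  -- Use edge `k` iff the prefix sum `pre k` of `t` along the path differs from `c`: for either
  -- value of `c` the internal vertex `w (k + 1)` then sees `pre k + pre (k + 1) = t (w (k + 1))`.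
  set pre : ℕ → ZMod 2 := fun k => ∑ i ∈ Ioc 0 k, t (w i)
  have hpre : ∀ k, pre (k + 1) = pre k + t (w (k + 1)) := fun k =>
    sum_Ioc_succ_top (Nat.zero_le k) _
  set C : ZMod 2 → Finset ℕ := fun c => (range ℓ).filter fun k => pre k ≠ c
  have hC : ∀ c, ∀ j ∈ Set.Ioo 0 ℓ, G.boundary ((C c).image f) (w j) = t (w j) := by
    intro c j hj
    rw [G.boundary_image_path hends hf hw (filter_subset _ _) hj]
    obtain ⟨hj0, hjℓ⟩ := hj
    obtain ⟨k, rfl⟩ : ∃ k, j = k + 1 := ⟨j - 1, by omega⟩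
    have hk : k < ℓ ∧ k + 1 < ℓ := ⟨by omega, hjℓ⟩
    simp only [mem_filter, mem_range, Nat.add_sub_cancel, hk, true_and, hpre]
    generalize pre k = a, t (w (k + 1)) = b
    revert a b c; decide
  have hcard : (C 0).card + (C 1).card = ℓ := by
    have h1 : C 1 = (range ℓ).filter fun k => ¬ pre k ≠ 0 :=
      filter_congr fun k _ => by generalize pre k = a; revert a; decide
    rw [h1, card_filter_add_card_filter_not, card_range]
  by_cases h0 : 2 * (C 0).card ≤ ℓ
  · exact ⟨C 0, filter_subset _ _, hC 0, h0⟩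
  · exact ⟨C 1, filter_subset _ _, hC 1, by omega⟩

lemma injOn_edges_of_injOn_verts (hends : ∀ k < ℓ, G.ends (f k) = s(w k, w (k + 1)))
    (hw : Set.InjOn w (Set.Iic ℓ)) : Set.InjOn f (Set.Iio ℓ) := by
  intro j hj k hk hjk
  simp only [Set.mem_Iio] at hj hk
  have hs : s(w j, w (j + 1)) = s(w k, w (k + 1)) := (hends j hj).symm.trans (hjk ▸ hends k hk)
  have hIic : ∀ i ≤ ℓ, i ∈ Set.Iic ℓ := fun _ hi => hi
  rcases Sym2.eq_iff.1 hs with ⟨h1, -⟩ | ⟨h1, h2⟩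
  · exact hw (hIic j hj.le) (hIic k hk.le) h1
  · have := hw (hIic j hj.le) (hIic (k + 1) hk) h1
    have := hw (hIic (j + 1) hj) (hIic k hk.le) h2
    omega

end Path

section Ears

def earOfFn (ℓ : ℕ) (w : ℕ → V) (f : ℕ → E) : Ear V E :=
  (List.ofFn fun k : Fin (ℓ + 1) => w k, List.ofFn fun k : Fin ℓ => f k)

structure IsEarPath (prev : Set V) (ℓ : ℕ) (w : ℕ → V) (f : ℕ → E) : Prop where
  length_pos : 0 < ℓ
  ends_eq : ∀ k < ℓ, G.ends (f k) = s(w k, w (k + 1))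
  injOn_edges : Set.InjOn f (Set.Iio ℓ)
  first_mem : w 0 ∈ prev
  last_mem : w ℓ ∈ prev
  injOn_inner : Set.InjOn w (Set.Ioo 0 ℓ)
  inner_not_mem : ∀ k ∈ Set.Ioo 0 ℓ, w k ∉ prev

variable {G} {prev : Set V} {ℓ : ℕ} {w : ℕ → V} {f : ℕ → E}

@[simp]
lemma mem_earOfFn_fst {x : V} : x ∈ (earOfFn ℓ w f).1 ↔ ∃ k ≤ ℓ, w k = x := by
  simp only [earOfFn, List.mem_ofFn, Fin.exists_iff, Nat.lt_succ_iff, exists_prop]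

@[simp]
lemma mem_earOfFn_snd {e : E} : e ∈ (earOfFn ℓ w f).2 ↔ ∃ k < ℓ, f k = e := by
  simp only [earOfFn, List.mem_ofFn, Fin.exists_iff, exists_prop]

@[simp]
lemma length_earOfFn_snd : (earOfFn ℓ w f).2.length = ℓ := by
  simp [earOfFn]

lemma innList_earOfFn :
    innList (earOfFn ℓ w f) = List.ofFn fun k : Fin (ℓ - 1) => w (k + 1) := by
  apply List.ext_getElem
  · simp [innList, earOfFn]
  · intro k _ _
    simp [innList, earOfFn]

lemma earOK_earOfFn_iff : G.EarOK prev (earOfFn ℓ w f) ↔ G.IsEarPath prev ℓ w f := by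
  have hget : ∀ k ≤ ℓ, (List.ofFn fun k : Fin (ℓ + 1) => w k)[k]? = some (w k) :=
    fun k hk => by rw [List.getElem?_ofFn, dif_pos (Nat.lt_succ_iff.2 hk)]
  have hhead : (List.ofFn fun k : Fin (ℓ + 1) => w k).head? = some (w 0) := by
    rw [List.head?_eq_getElem?, hget 0 (Nat.zero_le ℓ)]
  have hlast : (List.ofFn fun k : Fin (ℓ + 1) => w k).getLast? = some (w ℓ) := by
    rw [List.getLast?_eq_getElem?, List.length_ofFn, Nat.add_sub_cancel, hget ℓ le_rfl]
  rw [EarOK, innList_earOfFn]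
  simp only [earOfFn, hhead, hlast, Option.some.injEq, exists_eq_left', List.nodup_ofFn,
    injective_fin_iff_injOn_Iio (g := fun k => w (k + 1)), injective_fin_iff_injOn_Iio,
    injOn_succ_Iio_iff_injOn_Ioo, List.mem_ofFn, List.length_ofFn, List.get_eq_getElem,
    List.getElem_ofFn, ne_eq,
    List.ofFn_eq_nil_iff]
  constructor
  · rintro ⟨-, hne, hinj, hchain, h0, hℓ, hinner, hnot⟩
    refine ⟨Nat.pos_of_ne_zero hne, fun k hk => ?_, hinj, h0, hℓ, hinner, ?_⟩
    · obtain ⟨a, b, ha, hb, he⟩ := hchain k hk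
      rw [hget k hk.le, Option.some.injEq] at ha
      rw [hget (k + 1) hk, Option.some.injEq] at hb
      rwa [ha, hb]
    · rintro k ⟨hk0, hkℓ⟩ hk
      exact hnot _ ⟨⟨k - 1, by omega⟩, by simp [Nat.sub_add_cancel hk0]⟩ hk
  · intro h
    refine ⟨trivial, h.length_pos.ne', h.injOn_edges, fun k hk => ?_, h.first_mem, h.last_mem,
      h.injOn_inner, ?_⟩
    · exact ⟨w k, w (k + 1), hget k hk.le, hget (k + 1) hk, h.ends_eq k hk⟩
    · rintro x ⟨k, rfl⟩
      exact h.inner_not_mem _ ⟨by omega, by omega⟩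

lemma eq_earOfFn (P : Ear V E) (hlen : P.1.length = P.2.length + 1) (hne : P.2 ≠ []) :
    ∃ ℓ w f, P = earOfFn ℓ w f := by
  obtain ⟨e, -⟩ := List.exists_mem_of_ne_nil _ hne
  obtain ⟨x, -⟩ := List.exists_mem_of_ne_nil P.1 (List.ne_nil_of_length_pos (by omega))
  refine ⟨P.2.length, fun k => P.1.getD k x, fun k => P.2.getD k e, ?_⟩
  ext1
  · apply List.ext_getElem (by simp [earOfFn, hlen])
    intro k h _
    simp only [earOfFn, List.getElem_ofFn, List.getD_eq_getElem _ _ h]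
  · apply List.ext_getElem (by simp [earOfFn])
    intro k h _
    simp only [earOfFn, List.getElem_ofFn, List.getD_eq_getElem _ _ h]

lemma earOK_iff {P : Ear V E} :
    G.EarOK prev P ↔ ∃ ℓ w f, P = earOfFn ℓ w f ∧ G.IsEarPath prev ℓ w f := by
  constructor
  · intro h
    obtain ⟨ℓ, w, f, rfl⟩ := eq_earOfFn P h.1 h.2.1
    exact ⟨ℓ, w, f, rfl, earOK_earOfFn_iff.1 h⟩
  · rintro ⟨ℓ, w, f, rfl, h⟩
    exact earOK_earOfFn_iff.2 h

lemma IsEarPath.eq_of_inner (h : G.IsEarPath prev ℓ w f) :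
    ∀ j ∈ Set.Ioo 0 ℓ, ∀ k ≤ ℓ, w k = w j → k = j := by
  intro j hj k hk hkj
  have hk0 : k ≠ 0 := by rintro rfl; exact h.inner_not_mem j hj (hkj ▸ h.first_mem)
  have hkℓ : k ≠ ℓ := by rintro rfl; exact h.inner_not_mem j hj (hkj ▸ h.last_mem)
  exact h.injOn_inner ⟨by omega, by omega⟩ hj hkj

lemma IsEarPath.mem_or_mem_Ioo (h : G.IsEarPath prev ℓ w f) {k : ℕ} (hk : k ≤ ℓ) :
    w k ∈ prev ∨ k ∈ Set.Ioo 0 ℓ := by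
  rcases Nat.eq_zero_or_pos k with rfl | hk0
  · exact Or.inl h.first_mem
  rcases hk.lt_or_eq with hkℓ | rfl
  · exact Or.inr ⟨hk0, hkℓ⟩
  · exact Or.inl h.last_mem

lemma IsEarPath.mem_fst_of_mem_ends (h : G.IsEarPath prev ℓ w f) {k : ℕ} (hk : k < ℓ) {v : V}
    (hv : v ∈ G.ends (f k)) : ∃ j ≤ ℓ, w j = v := by
  rw [h.ends_eq k hk, Sym2.mem_iff] at hv
  rcases hv with rfl | rfl
  exacts [⟨k, hk.le, rfl⟩, ⟨k + 1, hk, rfl⟩]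

lemma IsEarPath.mem_of_sub_boundary_ne_zero (h : G.IsEarPath prev ℓ w f) {S : Finset E}
    (hS : ∀ e ∈ S, ∃ k < ℓ, f k = e) {t : V → ZMod 2}
    (hSt : ∀ k ∈ Set.Ioo 0 ℓ, G.boundary S (w k) = t (w k))
    (ht : ∀ v, t v ≠ 0 → v ∈ prev ∪ w '' Set.Ioo 0 ℓ) {v : V}
    (hv : t v - G.boundary S v ≠ 0) : v ∈ prev := by
  by_contra hvW
  by_cases hon : ∃ k ≤ ℓ, w k = v
  · obtain ⟨k, hk, rfl⟩ := hon
    rcases h.mem_or_mem_Ioo hk with hk' | hk'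
    · exact hvW hk'
    · exact hv (by rw [hSt k hk', sub_self])
  · have h0 : G.boundary S v = 0 := G.boundary_eq_zero fun e he hve => by
      obtain ⟨k, hk, rfl⟩ := hS e he
      exact hon (h.mem_fst_of_mem_ends hk hve)
    rcases ht v (by simpa [h0] using hv) with hvW' | ⟨k, hk, rfl⟩
    · exact hvW hvW'
    · exact hon ⟨k, hk.2.le, rfl⟩

end Ears

section EarSeq

def IsEarSeq (r : V) (ears : List (Ear V E)) : Prop :=
  ∀ i (h : i < ears.length), G.EarOK (vertsUpTo r (ears.take i)) (ears.get ⟨i, h⟩)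

variable {G} {r : V} {ears : List (Ear V E)}

lemma isEarSeq_nil : G.IsEarSeq r [] := fun i h => absurd h (Nat.not_lt_zero i)

lemma isEarSeq_append_singleton {P : Ear V E} :
    G.IsEarSeq r (ears ++ [P]) ↔ G.IsEarSeq r ears ∧ G.EarOK (vertsUpTo r ears) P := by
  constructor
  · intro h
    refine ⟨fun i hi => ?_, by simpa using h ears.length (by simp)⟩
    simpa [List.take_append_of_le_length hi.le, List.getElem_append_left hi] using
      h i (by simp; omega)
  · rintro ⟨h, hP⟩ i hi
    rcases Nat.lt_or_ge i ears.length with hi' | hi'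
    · simpa [List.take_append_of_le_length hi'.le, List.getElem_append_left hi'] using h i hi'
    · obtain rfl : i = ears.length := by simp at hi; omega
      simpa using hP

lemma vertsUpTo_nil : vertsUpTo r ([] : List (Ear V E)) = {r} := by
  simp [vertsUpTo]

lemma vertsUpTo_append_singleton {P : Ear V E} :
    vertsUpTo r (ears ++ [P]) = vertsUpTo r ears ∪ {x | x ∈ P.1} := by
  ext x
  simp [vertsUpTo, or_and_right, exists_or, or_assoc]

variable {ℓ : ℕ} {w : ℕ → V} {f : ℕ → E}

lemma IsEarPath.vertsUpTo_append (h : G.IsEarPath (vertsUpTo r ears) ℓ w f) :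
    vertsUpTo r (ears ++ [earOfFn ℓ w f]) = vertsUpTo r ears ∪ w '' Set.Ioo 0 ℓ := by
  rw [vertsUpTo_append_singleton]
  ext x
  simp only [Set.mem_union, Set.mem_ofPred_eq, mem_earOfFn_fst, Set.mem_image]
  constructor
  · rintro (hx | ⟨k, hk, rfl⟩)
    · exact Or.inl hx
    · exact (h.mem_or_mem_Ioo hk).imp id fun hk' => ⟨k, hk', rfl⟩
  · rintro (hx | ⟨k, hk, rfl⟩)
    · exact Or.inl hx
    · exact Or.inr ⟨k, hk.2.le, rfl⟩

lemma IsEarSeq.ncard_vertsUpTo [Finite V] (h : G.IsEarSeq r ears) :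
    (vertsUpTo r ears).ncard = 1 + (ears.map fun P => P.2.length - 1).sum := by
  induction ears using List.reverseRecOn with
  | nil => simp [vertsUpTo_nil]
  | append_singleton ears P ih =>
    obtain ⟨hseq, hP⟩ := isEarSeq_append_singleton.1 h
    obtain ⟨ℓ, w, f, rfl, hpath⟩ := earOK_iff.1 hP
    have hdisj : Disjoint (vertsUpTo r ears) (w '' Set.Ioo 0 ℓ) :=
      Set.disjoint_right.2 fun _ ⟨k, hk, hkx⟩ => hkx ▸ hpath.inner_not_mem k hk
    rw [hpath.vertsUpTo_append, Set.ncard_union_eq hdisj, ih hseq,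
      hpath.injOn_inner.ncard_image, Set.ncard_Ioo_nat]
    simp [add_assoc]

lemma IsEarSeq.ends_mem_vertsUpTo (h : G.IsEarSeq r ears) {e : E}
    (he : e ∈ ears.flatMap Prod.snd) {v : V} (hv : v ∈ G.ends e) : v ∈ vertsUpTo r ears := by
  obtain ⟨P, hP, heP⟩ := List.mem_flatMap.1 he
  obtain ⟨i, hi, rfl⟩ := List.mem_iff_getElem.1 hP
  obtain ⟨ℓ, w, f, hPeq, hpath⟩ := earOK_iff.1 (h i hi)
  simp only [List.get_eq_getElem] at hPeq
  rw [hPeq, mem_earOfFn_snd] at heP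
  obtain ⟨k, hk, rfl⟩ := heP
  obtain ⟨j, hj, rfl⟩ := hpath.mem_fst_of_mem_ends hk hv
  exact Or.inr ⟨_, hP, hPeq ▸ mem_earOfFn_fst.2 ⟨j, hj, rfl⟩⟩

lemma IsEarDecomp.isEarSeq (h : G.IsEarDecomp r ears) : G.IsEarSeq r ears :=
  h.1

lemma IsEarSeq.length_pos (h : G.IsEarSeq r ears) :
    ∀ P ∈ ears, 0 < P.2.length := by
  intro P hP
  obtain ⟨i, hi, rfl⟩ := List.mem_iff_getElem.1 hP
  exact List.length_pos_iff.2 (h i hi).2.1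

lemma IsEarSeq.exists_boundary_eq [Fintype V] [DecidableEq E] (h : G.IsEarSeq r ears)
    (hnd : (ears.flatMap Prod.snd).Nodup) (t : V → ZMod 2)
    (ht : ∀ v, t v ≠ 0 → v ∈ vertsUpTo r ears) (hsum : ∑ v, t v = 0) :
    ∃ F : Finset E, (∀ e ∈ F, e ∈ ears.flatMap Prod.snd) ∧ (∀ v, G.boundary F v = t v) ∧
      F.card ≤ (ears.map fun P => P.2.length / 2).sum := by
  induction ears using List.reverseRecOn generalizing t with
  | nil =>
    have hr : ∀ u ≠ r, t u = 0 := fun u hu =>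
      by_contra fun h0 => hu (by simpa [vertsUpTo_nil] using ht u h0)
    refine ⟨∅, by simp, fun v => ?_, by simp⟩
    rw [boundary, sum_empty, eq_comm]
    rcases eq_or_ne v r with rfl | hv
    · rwa [← sum_eq_single v (fun u _ hu => hr u hu) fun hv => absurd (mem_univ v) hv]
    · exact hr v hv
  | append_singleton ears P ih =>
    obtain ⟨hseq, hP⟩ := isEarSeq_append_singleton.1 h
    obtain ⟨ℓ, w, f, rfl, hpath⟩ := earOK_iff.1 hP
    simp only [List.flatMap_append, List.flatMap_singleton, List.nodup_append] at hnd
    obtain ⟨C, hCℓ, hCt, hCcard⟩ :=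
      G.exists_boundary_eq_on_path hpath.ends_eq hpath.injOn_edges hpath.eq_of_inner t
    set S := C.image f
    have hS : ∀ e ∈ S, ∃ k < ℓ, f k = e := fun e he => by
      obtain ⟨k, hk, rfl⟩ := mem_image.1 he
      exact ⟨k, mem_range.1 (hCℓ hk), rfl⟩
    have hsupp : ∀ v, (t - G.boundary S) v ≠ 0 → v ∈ vertsUpTo r ears := fun v hv =>
      hpath.mem_of_sub_boundary_ne_zero hS hCt (hpath.vertsUpTo_append ▸ ht) hv
    obtain ⟨F, hF, hFt, hFcard⟩ := ih hseq hnd.1 (t - G.boundary S) hsupp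
      (by simp [sum_sub_distrib, hsum, G.sum_boundary])
    have hdisj : Disjoint F S := disjoint_left.2 fun e heF heS => by
      obtain ⟨k, hk, rfl⟩ := hS e heS
      exact hnd.2.2 _ (hF _ heF) _ (mem_earOfFn_snd.2 ⟨k, hk, rfl⟩) rfl
    refine ⟨F ∪ S, fun e he => ?_, fun v => ?_, ?_⟩
    · simp only [List.flatMap_append, List.flatMap_singleton, List.mem_append]
      rcases mem_union.1 he with he | he
      · exact Or.inl (hF e he)
      · obtain ⟨k, hk, rfl⟩ := hS e he
        exact Or.inr (mem_earOfFn_snd.2 ⟨k, hk, rfl⟩)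
    · rw [G.boundary_union hdisj, hFt]
      simp
    · have hSC : S.card ≤ C.card := card_image_le
      rw [card_union_of_disjoint hdisj]
      simp only [List.map_append, List.map_singleton, List.sum_append, List.sum_singleton,
        length_earOfFn_snd]
      omega

end EarSeq

section Existence

lemma reach_mem_or_exists_crossing {m : E → ℕ} {W : Set V} {r x : V} (hr : r ∈ W)
    (h : G.Reach m r x) : x ∈ W ∨ ∃ e a b, G.ends e = s(a, b) ∧ a ∈ W ∧ b ∉ W := by
  induction h with
  | refl => exact Or.inl hr
  | @tail b c _ hbc ih =>
    rcases ih with hb | hcross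
    · obtain ⟨e, -, he⟩ := hbc
      by_cases hc : c ∈ W
      · exact Or.inl hc
      · exact Or.inr ⟨e, b, c, he, hb, hc⟩
    · exact Or.inr hcross

lemma exists_path_to_set [Nonempty E] {m : E → ℕ} {W : Set V} {b r : V} (hr : r ∈ W)
    (h : G.Reach m b r) :
    ∃ (n : ℕ) (w : ℕ → V) (f : ℕ → E), w 0 = b ∧ w n ∈ W ∧ (∀ k < n, w k ∉ W) ∧
      Set.InjOn w (Set.Iic n) ∧ ∀ k < n, 1 ≤ m (f k) ∧ G.ends (f k) = s(w k, w (k + 1)) := by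
  -- Take a path in the simple graph underlying the support of `m`, cut at its first vertex in `W`.
  let H : SimpleGraph V := SimpleGraph.fromEdgeSet {z | ∃ e, 1 ≤ m e ∧ G.ends e = z}
  have hreach : H.Reachable b r := by
    rw [SimpleGraph.reachable_fromEdgeSet_eq_reflTransGen_toRel]
    exact h
  obtain ⟨p, hp⟩ := hreach.some.toPath
  have hex : ∃ k, p.getVert k ∈ W := ⟨p.length, by rwa [p.getVert_length]⟩
  have hn : Nat.find hex ≤ p.length := Nat.find_min' hex (by rwa [p.getVert_length])
  have hedge : ∀ k, ∃ e, k < Nat.find hex →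
      1 ≤ m e ∧ G.ends e = s(p.getVert k, p.getVert (k + 1)) := by
    intro k
    by_cases hk : k < Nat.find hex
    · obtain ⟨⟨e, he⟩, -⟩ :=
        (SimpleGraph.fromEdgeSet_adj _).1 (p.adj_getVert_succ (i := k) (by omega))
      exact ⟨e, fun _ => he⟩
    · exact ⟨Classical.arbitrary E, fun h => absurd h hk⟩
  choose f hf using hedge
  exact ⟨Nat.find hex, p.getVert, f, p.getVert_zero, Nat.find_spec hex,
    fun k hk => Nat.find_min hex hk, hp.getVert_injOn.mono fun k hk => le_trans hk hn, hf⟩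

lemma exists_isEarPath_through [Fintype V] [DecidableEq E] (hG : G.TwoEdgeConnected)
    {W : Set V} {r : V} (hr : r ∈ W) {e₀ : E} {a b : V} (he₀ : G.ends e₀ = s(a, b))
    (ha : a ∈ W) : ∃ ℓ w f, G.IsEarPath W ℓ w f ∧ f 0 = e₀ := by
  have : Nonempty E := ⟨e₀⟩
  have hreach : G.Reach (Function.update (fun _ => 1) e₀ 0) b r := hG.2.2 e₀ le_rfl b r
  obtain ⟨n, w, f, hw0, hwn, hout, hinj, hf⟩ := G.exists_path_to_set hr hreach
  have hne : ∀ k < n, f k ≠ e₀ := fun k hk h => by simpa [h] using (hf k hk).1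
  have hfinj := G.injOn_edges_of_injOn_verts (fun k hk => (hf k hk).2) hinj
  refine ⟨n + 1, fun | 0 => a | k + 1 => w k, fun | 0 => e₀ | k + 1 => f k,
    ⟨n.succ_pos, ?_, ?_, ha, hwn, ?_, ?_⟩, rfl⟩
  · rintro (_ | k) hk
    · simp [he₀, hw0]
    · exact (hf k (by omega)).2
  · rintro (_ | j) hj (_ | k) hk hjk
    · rfl
    · exact absurd hjk.symm (hne k (by simp only [Set.mem_Iio] at hk; omega))
    · exact absurd hjk (hne j (by simp only [Set.mem_Iio] at hj; omega))
    · simp only [Set.mem_Iio] at hj hk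
      rw [hfinj (Set.mem_Iio.2 (by omega)) (Set.mem_Iio.2 (by omega)) hjk]
  · rintro (_ | j) ⟨hj, hj'⟩ (_ | k) ⟨hk, hk'⟩ hjk
    · rfl
    · omega
    · omega
    · rw [hinj (by simp; omega) (by simp; omega) hjk]
  · rintro (_ | k) ⟨hk, hk'⟩
    · omega
    · exact hout k (by omega)

variable {G} {r : V}

lemma IsEarSeq.exists_earOK [Fintype V] [DecidableEq E] (hG : G.TwoEdgeConnected)
    {ears : List (Ear V E)} (h : G.IsEarSeq r ears) {e₁ : E} (he₁ : e₁ ∉ ears.flatMap Prod.snd) :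
    ∃ P : Ear V E, G.EarOK (vertsUpTo r ears) P ∧ ∀ e ∈ P.2, e ∉ ears.flatMap Prod.snd := by
  have hr : r ∈ vertsUpTo r ears := Set.mem_insert r _
  obtain ⟨e₀, a, b, he₀, ha, he₀new⟩ : ∃ e₀ a b, G.ends e₀ = s(a, b) ∧
      a ∈ vertsUpTo r ears ∧ e₀ ∉ ears.flatMap Prod.snd := by
    obtain ⟨x, y, -, hxy⟩ := G.exists_ends_eq e₁
    rcases G.reach_mem_or_exists_crossing hr (hG.2.1 r x) with hx | ⟨e, a, b, he, ha, hb⟩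
    · exact ⟨e₁, x, y, hxy, hx, he₁⟩
    · exact ⟨e, a, b, he, ha, fun hcov =>
        hb (h.ends_mem_vertsUpTo hcov (he ▸ Sym2.mem_mk_right a b))⟩
  obtain ⟨ℓ, w, f, hpath, hf0⟩ := G.exists_isEarPath_through hG hr he₀ ha
  refine ⟨earOfFn ℓ w f, earOK_earOfFn_iff.2 hpath, fun e he hcov => ?_⟩
  obtain ⟨k, hk, rfl⟩ := mem_earOfFn_snd.1 he
  rcases Nat.eq_zero_or_pos k with rfl | hk0
  · exact he₀new (hf0 ▸ hcov)
  · exact hpath.inner_not_mem k ⟨hk0, hk⟩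
      (h.ends_mem_vertsUpTo hcov (hpath.ends_eq k hk ▸ Sym2.mem_mk_left _ _))

lemma IsEarSeq.exists_cover [Fintype V] [Fintype E] [DecidableEq E] (hG : G.TwoEdgeConnected)
    {ears : List (Ear V E)} (h : G.IsEarSeq r ears) (hnd : (ears.flatMap Prod.snd).Nodup) :
    ∃ ears', G.IsEarSeq r ears' ∧ (ears'.flatMap Prod.snd).Nodup ∧
      ∀ e, e ∈ ears'.flatMap Prod.snd := by
  by_cases hall : ∀ e, e ∈ ears.flatMap Prod.snd
  · exact ⟨ears, h, hnd, hall⟩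
  obtain ⟨e₁, he₁⟩ := not_forall.1 hall
  obtain ⟨P, hP, hPnew⟩ := h.exists_earOK hG he₁
  have hnd' : ((ears ++ [P]).flatMap Prod.snd).Nodup := by
    simp only [List.flatMap_append, List.flatMap_singleton, List.nodup_append]
    exact ⟨hnd, hP.2.2.1, fun a ha b hb hab => hPnew b hb (hab ▸ ha)⟩
  have hlen := hnd'.length_le_card
  have hP0 : 0 < P.2.length := List.length_pos_iff.2 hP.2.1
  exact IsEarSeq.exists_cover hG (isEarSeq_append_singleton.2 ⟨h, hP⟩) hnd'
termination_by Fintype.card E - (ears.flatMap Prod.snd).length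
decreasing_by
  simp only [List.flatMap_append, List.flatMap_singleton, List.length_append] at hlen ⊢
  omega

variable (G)

lemma exists_isEarDecomp [Fintype V] [Fintype E] [DecidableEq E] (hG : G.TwoEdgeConnected) :
    ∃ r ears, G.IsEarDecomp r ears := by
  obtain ⟨r⟩ : Nonempty V := Fintype.card_pos_iff.1 (by have := hG.1; omega)
  obtain ⟨ears, hseq, hnd, hcov⟩ := isEarSeq_nil.exists_cover hG (by simp)
  refine ⟨r, ears, hseq, Set.eq_univ_of_forall fun v => ?_, hcov, hnd⟩
  rcases G.reach_mem_or_exists_crossing (Set.mem_insert r _) (hG.2.1 r v) with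
    hv | ⟨e, a, b, he, -, hb⟩
  · exact hv
  · exact absurd (hseq.ends_mem_vertsUpTo (hcov e) (he ▸ Sym2.mem_mk_right a b)) hb

lemma exists_isEarDecomp_countP_eq_phi [Fintype V] [Fintype E] [DecidableEq E]
    (hG : G.TwoEdgeConnected) :
    ∃ r ears, G.IsEarDecomp r ears ∧ ears.countP (fun P => decide (Even P.2.length)) = G.phi := by
  obtain ⟨r, ears, h⟩ := G.exists_isEarDecomp hG
  show G.phi ∈ {n | ∃ (r : V) (ears : List (Ear V E)), G.IsEarDecomp r ears ∧
    ears.countP (fun P => decide (Even P.2.length)) = n}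
  exact Nat.sInf_mem ⟨_, r, ears, h, rfl⟩

end Existence

end MGraph

namespace Graph

theorem stmt_7 {V E : Type} [Fintype V] [Fintype E] [DecidableEq V] [DecidableEq E]
    (G : MGraph V E) (hG : G.TwoEdgeConnected)
    (T : Finset V) (hT : Even T.card) :
    ∃ F : Finset E, G.IsTJoinF T F ∧
      2 * F.card + 1 ≤ Fintype.card V + G.phi := by
  obtain ⟨r, ears, hdec, hφ⟩ := G.exists_isEarDecomp_countP_eq_phi hG
  have hseq := hdec.isEarSeq
  obtain ⟨-, huniv, -, hnd⟩ := hdec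
  have hsum : ∑ v, (if v ∈ T then 1 else 0 : ZMod 2) = 0 := by
    simpa [sum_boole] using (ZMod.natCast_eq_zero_iff_even.2 hT)
  obtain ⟨F, -, hFT, hFcard⟩ :=
    hseq.exists_boundary_eq hnd _ (fun v _ => huniv ▸ Set.mem_univ v) hsum
  refine ⟨F, (G.isTJoinF_iff T F).2 hFT, ?_⟩
  have hV := hseq.ncard_vertsUpTo
  rw [huniv, Set.ncard_univ, Nat.card_eq_fintype_card] at hV
  have := List.two_mul_sum_map_div_two ears (fun P => P.2.length) hseq.length_pos
  omega

end Graph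
end

section
/- Let E be a finite set, r the rank function of a matroid on E, and E1, …, Ek ⊆ E. Then max{ r({e1,…,ek}) : e_i ∈ E_i for all i } = min{ r(⋃_{i∈I} E_i) + k - |I| : I ⊆ {1,…,k} }. -/
open Finset

lemma rank_union_card {α : Type} [DecidableEq α] (r : Finset α → ℕ)
    (hstep : ∀ (A : Finset α) (a : α), r (insert a A) ≤ r A + 1) :
    ∀ (A B : Finset α), r (A ∪ B) ≤ r A + B.card := by
  intro A B
  induction B using Finset.induction_on with
  | empty => simp
  | @insert a B ha ih =>
    rw [Finset.union_insert, Finset.card_insert_of_notMem ha]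
    calc r (insert a (A ∪ B)) ≤ r (A ∪ B) + 1 := hstep _ _
      _ ≤ r A + B.card + 1 := by omega

lemma rank_ub {α : Type} [DecidableEq α] [Fintype α] (r : Finset α → ℕ)
    (hstep : ∀ (A : Finset α) (a : α), r (insert a A) ≤ r A + 1)
    (hmono : ∀ A B : Finset α, A ⊆ B → r A ≤ r B)
    {k : ℕ} (Es : Fin k → Finset α) (e : Fin k → α) (he : ∀ i, e i ∈ Es i)
    (I : Finset (Fin k)) :
    r (Finset.image e Finset.univ) ≤ r (I.biUnion Es) + (k - I.card) := by
  have himg : Finset.image e Finset.univ = Finset.image e I ∪ Finset.image e (Finset.univ \ I) := by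
    rw [← Finset.image_union, Finset.union_sdiff_of_subset (Finset.subset_univ I)]
  rw [himg]
  calc r (Finset.image e I ∪ Finset.image e (Finset.univ \ I))
      ≤ r (Finset.image e I) + (Finset.image e (Finset.univ \ I)).card :=
        rank_union_card r hstep _ _
    _ ≤ r (I.biUnion Es) + (k - I.card) := by
        gcongr
        · apply hmono
          intro z hz
          simp only [Finset.mem_image] at hz
          obtain ⟨i, hi, rfl⟩ := hz
          exact Finset.mem_biUnion.mpr ⟨i, hi, he i⟩
        · calc (Finset.image e (Finset.univ \ I)).card ≤ (Finset.univ \ I).card :=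
              Finset.card_image_le
            _ = k - I.card := by
              rw [Finset.card_sdiff_of_subset (Finset.subset_univ I)]
              simp


lemma rado_key {α : Type} [DecidableEq α] [Fintype α] (r : Finset α → ℕ)
    (hmono : ∀ A B : Finset α, A ⊆ B → r A ≤ r B)
    (hsub : ∀ A B : Finset α, r (A ∪ B) + r (A ∩ B) ≤ r A + r B)
    {k : ℕ} :
    ∀ (N : ℕ) (Es : Fin k → Finset α), (∑ i, (Es i).card) = N → (∀ i, (Es i).Nonempty) →
    ∃ e : Fin k → α, (∀ i, e i ∈ Es i) ∧
      sInf {n | ∃ I : Finset (Fin k), n = r (I.biUnion Es) + (k - I.card)}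
        ≤ r (Finset.image e Finset.univ) := by
  intro N
  induction N using Nat.strong_induction_on with
  | _ N ih =>
  intro Es hsum hne
  by_cases hbase : ∀ i, (Es i).card ≤ 1
  · choose e he using hne
    refine ⟨e, he, ?_⟩
    have him : Finset.univ.biUnion Es = Finset.image e Finset.univ := by
      apply Finset.Subset.antisymm
      · intro z hz
        obtain ⟨i, -, hzi⟩ := Finset.mem_biUnion.mp hz
        have : z = e i := Finset.card_le_one.mp (hbase i) z hzi (e i) (he i)
        exact this ▸ Finset.mem_image_of_mem e (Finset.mem_univ i)
      · intro z hz
        obtain ⟨i, -, rfl⟩ := Finset.mem_image.mp hz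
        exact Finset.mem_biUnion.mpr ⟨i, Finset.mem_univ i, he i⟩
    apply Nat.sInf_le
    refine ⟨Finset.univ, ?_⟩
    simp [him]
  · push_neg at hbase
    obtain ⟨j, hj⟩ := hbase
    obtain ⟨x, y, hx, hy, hxy⟩ := Finset.one_lt_card_iff.mp hj
    set S := {n | ∃ I : Finset (Fin k), n = r (I.biUnion Es) + (k - I.card)} with hS
    set m := sInf S with hm
    -- two modified systems
    have step : ∀ z ∈ Es j,
        m ≤ sInf {n | ∃ I : Finset (Fin k),
            n = r (I.biUnion (Function.update Es j ((Es j).erase z))) + (k - I.card)} →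
        ∃ e : Fin k → α, (∀ i, e i ∈ Es i) ∧ m ≤ r (Finset.image e Finset.univ) := by
      intro z hz hle
      set Es' := Function.update Es j ((Es j).erase z) with hEs'
      have hne' : ∀ i, (Es' i).Nonempty := by
        intro i
        rcases eq_or_ne i j with rfl | hij
        · rw [hEs', Function.update_self]
          rw [← Finset.card_pos, Finset.card_erase_of_mem hz]
          omega
        · rw [hEs', Function.update_of_ne hij]
          exact hne i
      have hlt : (∑ i, (Es' i).card) < N := by
        rw [← hsum, hEs']
        rw [← Finset.add_sum_erase _ (fun i => (Es' i).card) (Finset.mem_univ j),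
            ← Finset.add_sum_erase _ (fun i => (Es i).card) (Finset.mem_univ j)]
        have h1 : (Es' j).card < (Es j).card := by
          rw [hEs', Function.update_self, Finset.card_erase_of_mem hz]
          have := Finset.card_pos.mpr (hne j)
          omega
        have h2 : ∑ i ∈ Finset.univ.erase j, (Es' i).card
            = ∑ i ∈ Finset.univ.erase j, (Es i).card := by
          apply Finset.sum_congr rfl
          intro i hi
          rw [hEs', Function.update_of_ne (Finset.ne_of_mem_erase hi)]
        omega
      obtain ⟨e, he, hle'⟩ := ih _ hlt Es' rfl hne'
      refine ⟨e, ?_, le_trans hle hle'⟩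
      intro i
      rcases eq_or_ne i j with rfl | hij
      · have := he i
        rw [hEs', Function.update_self] at this
        exact Finset.erase_subset _ _ this
      · have := he i
        rwa [hEs', Function.update_of_ne hij] at this
    rcases le_or_gt m (sInf {n | ∃ I : Finset (Fin k),
        n = r (I.biUnion (Function.update Es j ((Es j).erase x))) + (k - I.card)}) with hmx | hmx
    · exact step x hx hmx
    rcases le_or_gt m (sInf {n | ∃ I : Finset (Fin k),
        n = r (I.biUnion (Function.update Es j ((Es j).erase y))) + (k - I.card)}) with hmy | hmy
    · exact step y hy hmy
    exfalso
    clear step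
    obtain ⟨I, hI⟩ := Nat.sInf_mem (⟨_, ⟨∅, rfl⟩⟩ : Set.Nonempty {n | ∃ I : Finset (Fin k),
        n = r (I.biUnion (Function.update Es j ((Es j).erase x))) + (k - I.card)})
    obtain ⟨J, hJ⟩ := Nat.sInf_mem (⟨_, ⟨∅, rfl⟩⟩ : Set.Nonempty {n | ∃ I : Finset (Fin k),
        n = r (I.biUnion (Function.update Es j ((Es j).erase y))) + (k - I.card)})
    rw [hI] at hmx
    rw [hJ] at hmy
    have hjI : j ∈ I := by
      by_contra hjI
      have heq : I.biUnion (Function.update Es j ((Es j).erase x)) = I.biUnion Es :=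
        Finset.biUnion_congr rfl
          (fun i hi => Function.update_of_ne (ne_of_mem_of_not_mem hi hjI) _ _)
      rw [heq] at hmx
      have := Nat.sInf_le (show _ ∈ S from ⟨I, rfl⟩)
      omega
    have hjJ : j ∈ J := by
      by_contra hjJ
      have heq : J.biUnion (Function.update Es j ((Es j).erase y)) = J.biUnion Es :=
        Finset.biUnion_congr rfl
          (fun i hi => Function.update_of_ne (ne_of_mem_of_not_mem hi hjJ) _ _)
      rw [heq] at hmy
      have := Nat.sInf_le (show _ ∈ S from ⟨J, rfl⟩)
      omega
    have hU : (I ∪ J).biUnion Es ⊆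
        I.biUnion (Function.update Es j ((Es j).erase x)) ∪
        J.biUnion (Function.update Es j ((Es j).erase y)) := by
      intro z hz
      obtain ⟨i, hiIJ, hzi⟩ := Finset.mem_biUnion.mp hz
      rcases eq_or_ne i j with rfl | hij
      · rcases ne_or_eq z x with hzx | rfl
        · refine Finset.mem_union.mpr (Or.inl (Finset.mem_biUnion.mpr ⟨i, hjI, ?_⟩))
          rw [Function.update_self]
          exact Finset.mem_erase.mpr ⟨hzx, hzi⟩
        · refine Finset.mem_union.mpr (Or.inr (Finset.mem_biUnion.mpr ⟨i, hjJ, ?_⟩))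
          rw [Function.update_self]
          exact Finset.mem_erase.mpr ⟨hxy, hzi⟩
      · rcases Finset.mem_union.mp hiIJ with hiI | hiJ
        · refine Finset.mem_union.mpr (Or.inl (Finset.mem_biUnion.mpr ⟨i, hiI, ?_⟩))
          rw [Function.update_of_ne hij]; exact hzi
        · refine Finset.mem_union.mpr (Or.inr (Finset.mem_biUnion.mpr ⟨i, hiJ, ?_⟩))
          rw [Function.update_of_ne hij]; exact hzi
    have hInt : ((I ∩ J).erase j).biUnion Es ⊆
        I.biUnion (Function.update Es j ((Es j).erase x)) ∩
        J.biUnion (Function.update Es j ((Es j).erase y)) := by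
      intro z hz
      obtain ⟨i, hi, hzi⟩ := Finset.mem_biUnion.mp hz
      have hij := Finset.ne_of_mem_erase hi
      have hiIJ := Finset.mem_inter.mp (Finset.mem_of_mem_erase hi)
      refine Finset.mem_inter.mpr
        ⟨Finset.mem_biUnion.mpr ⟨i, hiIJ.1, ?_⟩, Finset.mem_biUnion.mpr ⟨i, hiIJ.2, ?_⟩⟩ <;>
        (rw [Function.update_of_ne hij]; exact hzi)
    have h3 := Nat.sInf_le (show _ ∈ S from ⟨I ∪ J, rfl⟩)
    have h4 := Nat.sInf_le (show _ ∈ S from ⟨(I ∩ J).erase j, rfl⟩)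
    have h5 := hmono _ _ hU
    have h6 := hmono _ _ hInt
    have h7 := hsub (I.biUnion (Function.update Es j ((Es j).erase x)))
      (J.biUnion (Function.update Es j ((Es j).erase y)))
    have hc := Finset.card_union_add_card_inter I J
    have hcj : ((I ∩ J).erase j).card = (I ∩ J).card - 1 :=
      Finset.card_erase_of_mem (Finset.mem_inter.mpr ⟨hjI, hjJ⟩)
    have hjIJ : 1 ≤ (I ∩ J).card := Finset.card_pos.mpr ⟨j, Finset.mem_inter.mpr ⟨hjI, hjJ⟩⟩
    have hIk : I.card ≤ k := by simpa using Finset.card_le_univ I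
    have hJk : J.card ≤ k := by simpa using Finset.card_le_univ J
    have hUk : (I ∪ J).card ≤ k := by simpa using Finset.card_le_univ (I ∪ J)
    have hIJk : (I ∩ J).card ≤ k := by simpa using Finset.card_le_univ (I ∩ J)
    omega

theorem stmt_10 {α : Type} [DecidableEq α] [Fintype α]
    (r : Finset α → ℕ)
    (h0 : r ∅ = 0)
    (hstep : ∀ (A : Finset α) (a : α), r (insert a A) ≤ r A + 1)
    (hmono : ∀ A B : Finset α, A ⊆ B → r A ≤ r B)
    (hsub : ∀ A B : Finset α, r (A ∪ B) + r (A ∩ B) ≤ r A + r B)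
    (k : ℕ) (Es : Fin k → Finset α) (hne : ∀ i, (Es i).Nonempty) :
    sSup {n | ∃ e : Fin k → α, (∀ i, e i ∈ Es i) ∧ r (Finset.image e Finset.univ) = n}
      = sInf {n | ∃ I : Finset (Fin k), n = r (I.biUnion Es) + (k - I.card)} := by
  set S := {n | ∃ I : Finset (Fin k), n = r (I.biUnion Es) + (k - I.card)} with hS
  have hSne : S.Nonempty := ⟨_, ⟨∅, rfl⟩⟩
  obtain ⟨e, he, hle⟩ := rado_key r hmono hsub _ Es rfl hne
  have hub : ∀ e' : Fin k → α, (∀ i, e' i ∈ Es i) →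
      r (Finset.image e' Finset.univ) ≤ sInf S := by
    intro e' he'
    apply le_csInf hSne
    rintro n ⟨I, rfl⟩
    exact rank_ub r hstep hmono Es e' he' I
  have hm : sInf S ∈ {n | ∃ e : Fin k → α,
      (∀ i, e i ∈ Es i) ∧ r (Finset.image e Finset.univ) = n} :=
    ⟨e, he, le_antisymm (hub e he) hle⟩
  have hTub : ∀ n ∈ {n | ∃ e : Fin k → α,
      (∀ i, e i ∈ Es i) ∧ r (Finset.image e Finset.univ) = n}, n ≤ sInf S := by
    rintro n ⟨e', he', rfl⟩
    exact hub e' he'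
  exact le_antisymm (csSup_le ⟨_, hm⟩ hTub) (le_csSup ⟨_, hTub⟩ hm)
end

section
/- Let U and M be finite sets and let U_f be a nonempty subset of U for each f ∈ M. Then the maximum cardinality of a subset F ⊆ M for which (U_f)_{f∈F} has a forest representative system equals min over partitions W of U of |M| - Σ_{W∈W} ( |{f ∈ M : U_f ⊆ W}| - (|W| - 1) ). -/
/-!
Forest representative systems of `(U_f)` are the partial transversals of the edge sets
`(U_f).sym2` that are independent in the graphic matroid on `U`, whose rank is `|U|` minus the
number of components, so the formula is Rado's theorem with deficiency for this matroid.
Weak duality is counting: a forest has fewer than `|W|` edges inside a part `W`. Conversely, for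
every subfamily `F` the components of `⋃ f ∈ F, (U_f).sym2` form a partition whose value is at
most `|M| - |F| + rank`; a partition of least value therefore gives Rado's condition with the
right deficiency. Rado's theorem is proved by shrinking the candidate sets one element at a time
until they are singletons; supermodularity of the number of components shows that one of two
complementary shrinkings keeps the condition.
-/

open Finset
open scoped Classical

/-- `(e f)_{f ∈ F}` is a forest representative system for `(Uf f)_{f ∈ F}`:
pairwise distinct 2-element subsets `e f ⊆ Uf f` whose union is a forest. -/
def IsFRS {U M : Type} [DecidableEq U] (Uf : M → Finset U) (F : Finset M)
    (e : M → Sym2 U) : Prop :=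
  (∀ f ∈ F, ¬ (e f).IsDiag ∧ ∀ x ∈ e f, x ∈ Uf f) ∧
  Set.InjOn e ↑F ∧
  (SimpleGraph.fromEdgeSet {s | ∃ f ∈ F, e f = s}).IsAcyclic

namespace ForestRep

variable {V : Type}

def Linked (S : Finset (Sym2 V)) : V → V → Prop :=
  Relation.ReflTransGen fun a b => s(a, b) ∈ S

section Linked

variable {S T : Finset (Sym2 V)} {a b c x y : V}

@[simp]
theorem Linked.rfl : Linked S a a :=
  .refl

theorem Linked.of_mem (h : s(a, b) ∈ S) : Linked S a b :=
  .single h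

theorem Linked.mono (hST : S ⊆ T) (h : Linked S a b) : Linked T a b :=
  Relation.ReflTransGen.mono (fun _ _ h => hST h) _ _ h

theorem Linked.symm (h : Linked S a b) : Linked S b a := by
  induction h with
  | refl => exact .rfl
  | tail _ hcd ih => exact ih.head (by rwa [Sym2.eq_swap])

theorem Linked.trans (h₁ : Linked S a b) (h₂ : Linked S b c) : Linked S a c :=
  Relation.ReflTransGen.trans h₁ h₂

theorem Linked.eq_of_empty (h : Linked (∅ : Finset (Sym2 V)) a b) : a = b := by
  induction h with
  | refl => rfl
  | tail _ hcd => simp at hcd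

theorem Linked.eq_or_mem_of_subset_sym2 {W : Finset V} (hS : S ⊆ W.sym2) (h : Linked S a b) :
    a = b ∨ a ∈ W ∧ b ∈ W := by
  induction h with
  | refl => left; rfl
  | tail _ hcd ih =>
    have hcdW := mem_sym2_iff.1 (hS hcd)
    rcases ih with rfl | ⟨ha, -⟩
    · exact .inr ⟨hcdW _ (Sym2.mem_mk_left _ _), hcdW _ (Sym2.mem_mk_right _ _)⟩
    · exact .inr ⟨ha, hcdW _ (Sym2.mem_mk_right _ _)⟩

variable [DecidableEq V]

theorem linked_insert_iff :
    Linked (insert s(x, y) S) a b ↔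
      Linked S a b ∨ (Linked S a x ∧ Linked S y b) ∨ (Linked S a y ∧ Linked S x b) := by
  refine ⟨fun h => ?_, ?_⟩
  · induction h with
    | refl => exact .inl .rfl
    | @tail c d _ hcd ih =>
      rcases mem_insert.1 hcd with hcd | hcd
      · obtain ⟨rfl, rfl⟩ | ⟨rfl, rfl⟩ := Sym2.eq_iff.1 hcd <;>
          rcases ih with h | ⟨h, h'⟩ | ⟨h, h'⟩
        · exact .inr (.inl ⟨h, .rfl⟩)
        · exact .inr (.inl ⟨h, .rfl⟩)
        · exact .inl h
        · exact .inr (.inr ⟨h, .rfl⟩)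
        · exact .inl h
        · exact .inr (.inr ⟨h, .rfl⟩)
      · rcases ih with h | ⟨h, h'⟩ | ⟨h, h'⟩
        · exact .inl (h.tail hcd)
        · exact .inr (.inl ⟨h, h'.tail hcd⟩)
        · exact .inr (.inr ⟨h, h'.tail hcd⟩)
  · have hsub : S ⊆ insert s(x, y) S := subset_insert _ _
    have hxy : Linked (insert s(x, y) S) x y := .of_mem (mem_insert_self _ _)
    rintro (h | ⟨h, h'⟩ | ⟨h, h'⟩)
    · exact h.mono hsub
    · exact ((h.mono hsub).trans hxy).trans (h'.mono hsub)
    · exact ((h.mono hsub).trans hxy.symm).trans (h'.mono hsub)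

theorem linked_insert_iff_of_linked (hxy : Linked S x y) :
    Linked (insert s(x, y) S) a b ↔ Linked S a b := by
  rw [linked_insert_iff]
  refine ⟨?_, .inl⟩
  rintro (h | ⟨h, h'⟩ | ⟨h, h'⟩)
  · exact h
  · exact (h.trans hxy).trans h'
  · exact (h.trans hxy.symm).trans h'

end Linked

def linkedSetoid (S : Finset (Sym2 V)) : Setoid V :=
  ⟨Linked S, ⟨fun _ => .rfl, Linked.symm, Linked.trans⟩⟩

noncomputable def numComponents (S : Finset (Sym2 V)) : ℕ :=
  Nat.card (Quotient (linkedSetoid S))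

section numComponents

variable {S T : Finset (Sym2 V)} {x y : V}

theorem numComponents_insert_of_linked [DecidableEq V] (h : Linked S x y) :
    numComponents (insert s(x, y) S) = numComponents S := by
  have : linkedSetoid (insert s(x, y) S) = linkedSetoid S :=
    Setoid.ext fun _ _ => linked_insert_iff_of_linked h
  rw [numComponents, this, numComponents]

variable [Fintype V]

theorem numComponents_anti (hST : S ⊆ T) : numComponents T ≤ numComponents S :=
  Nat.card_le_card_of_surjective _ <|
    Quotient.map_surjective (f := id) (fun _ _ h => Linked.mono hST h) Function.surjective_id

theorem card_le_numComponents_of_surjective {P : Type} (g : V → P)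
    (hg : ∀ a b, Linked S a b → g a = g b) (hsurj : g.Surjective) :
    Nat.card P ≤ numComponents S :=
  Nat.card_le_card_of_surjective (Quotient.lift (s := linkedSetoid S) g hg) fun p =>
    let ⟨a, ha⟩ := hsurj p; ⟨⟦a⟧, ha⟩

@[simp]
theorem numComponents_empty : numComponents (∅ : Finset (Sym2 V)) = Fintype.card V := by
  rw [← Nat.card_eq_fintype_card]
  refine le_antisymm (Nat.card_le_card_of_surjective _ Quotient.mk_surjective) ?_
  exact card_le_numComponents_of_surjective id (fun _ _ => Linked.eq_of_empty)
    Function.surjective_id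

variable [DecidableEq V]

/-- The classes of `S` other than that of `y` correspond bijectively to the classes of
`insert s(x, y) S`. -/
theorem numComponents_insert_of_not_linked (h : ¬ Linked S x y) :
    numComponents (insert s(x, y) S) + 1 = numComponents S := by
  set T := insert s(x, y) S
  let π : Quotient (linkedSetoid S) → Quotient (linkedSetoid T) :=
    Quotient.map id fun _ _ hab => Linked.mono (subset_insert _ _) hab
  let y' : Quotient (linkedSetoid S) := ⟦y⟧
  have hπ : Function.Bijective fun q : {q // q ≠ y'} => π q := by
    constructor
    · rintro ⟨q, hq⟩ ⟨q', hq'⟩ hqq'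
      induction q using Quotient.inductionOn with | _ a
      induction q' using Quotient.inductionOn with | _ b
      have ha : ¬ Linked S a y := fun h' => hq (Quotient.sound h')
      have hb : ¬ Linked S b y := fun h' => hq' (Quotient.sound h')
      refine Subtype.ext (Quotient.sound ?_)
      rcases linked_insert_iff.1 (Quotient.exact hqq') with hab | ⟨-, hyb⟩ | ⟨hay, -⟩
      · exact hab
      · exact absurd hyb.symm hb
      · exact absurd hay ha
    · intro q
      induction q using Quotient.inductionOn with | _ v
      by_cases hv : Linked S v y
      · refine ⟨⟨⟦x⟧, fun h' => h (Quotient.exact h')⟩, Quotient.sound ?_⟩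
        exact (linked_insert_iff.2 (.inr (.inr ⟨hv, .rfl⟩))).symm
      · exact ⟨⟨⟦v⟧, fun h' => hv (Quotient.exact h')⟩, rfl⟩
  rw [numComponents, numComponents, ← Nat.card_congr (Equiv.ofBijective _ hπ),
    ← Nat.card_congr (Equiv.optionSubtypeNe y')]
  simp only [Nat.card_eq_fintype_card, Fintype.card_option]

end numComponents

section Forest

variable [Fintype V] {S T : Finset (Sym2 V)} {x y : V}

def IsForest (S : Finset (Sym2 V)) : Prop :=
  #S + numComponents S = Fintype.card V

@[simp]
theorem isForest_empty : IsForest (∅ : Finset (Sym2 V)) := by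
  simp [IsForest]

variable [DecidableEq V]

theorem numComponents_insert_cases (S : Finset (Sym2 V)) (ε : Sym2 V) :
    numComponents (insert ε S) = numComponents S ∨
      numComponents (insert ε S) + 1 = numComponents S := by
  induction ε using Sym2.inductionOn with
  | hf x y =>
    by_cases h : Linked S x y
    · exact .inl (numComponents_insert_of_linked h)
    · exact .inr (numComponents_insert_of_not_linked h)

theorem card_add_numComponents_le_insert (S : Finset (Sym2 V)) (ε : Sym2 V) :
    #S + numComponents S ≤ #(insert ε S) + numComponents (insert ε S) := by
  by_cases hε : ε ∈ S
  · rw [insert_eq_of_mem hε]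
  · rw [card_insert_of_notMem hε]
    rcases numComponents_insert_cases S ε with h | h <;> omega

theorem card_le_card_add_numComponents (S : Finset (Sym2 V)) :
    Fintype.card V ≤ #S + numComponents S := by
  induction S using Finset.induction with
  | empty => simp
  | insert ε S _ ih => exact ih.trans (card_add_numComponents_le_insert S ε)

theorem isForest_insert_iff (h : s(x, y) ∉ S) :
    IsForest (insert s(x, y) S) ↔ IsForest S ∧ ¬ Linked S x y := by
  have hle := card_le_card_add_numComponents S
  unfold IsForest
  rw [card_insert_of_notMem h]
  by_cases hxy : Linked S x y
  · rw [numComponents_insert_of_linked hxy]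
    simp only [hxy, not_true_eq_false, and_false, iff_false]
    omega
  · have := numComponents_insert_of_not_linked hxy
    simp only [hxy, not_false_eq_true, and_true]
    omega

theorem IsForest.mono (hS : IsForest S) (hTS : T ⊆ S) : IsForest T := by
  suffices ∀ D : Finset (Sym2 V), IsForest (T ∪ D) → IsForest T by
    exact this S (by rwa [union_eq_right.2 hTS])
  intro D
  induction D using Finset.induction with
  | empty => simp
  | insert ε D _ ih =>
    rw [union_insert]
    intro hD
    refine ih (le_antisymm ?_ (card_le_card_add_numComponents _))
    exact (card_add_numComponents_le_insert _ ε).trans hD.le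

theorem exists_isForest_subset (S : Finset (Sym2 V)) :
    ∃ T ⊆ S, IsForest T ∧ numComponents T = numComponents S := by
  induction S using Finset.induction with
  | empty => exact ⟨∅, subset_rfl, isForest_empty, rfl⟩
  | @insert ε S hε ih =>
    obtain ⟨T, hTS, hT, hTc⟩ := ih
    induction ε using Sym2.inductionOn with
    | hf x y =>
      by_cases hxy : Linked S x y
      · refine ⟨T, hTS.trans (subset_insert _ _), hT, ?_⟩
        rw [numComponents_insert_of_linked hxy, hTc]
      · have hxyT : ¬ Linked T x y := fun h => hxy (h.mono hTS)
        refine ⟨insert s(x, y) T, insert_subset_insert _ hTS,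
          (isForest_insert_iff fun h => hε (hTS h)).2 ⟨hT, hxyT⟩, ?_⟩
        have := numComponents_insert_of_not_linked hxy
        have := numComponents_insert_of_not_linked hxyT
        omega

/-- Outside `W` every vertex is its own component, and `W` contributes at least one more. -/
theorem IsForest.card_lt_card {W : Finset V} (hS : IsForest S) (hW : W.Nonempty)
    (hSW : S ⊆ W.sym2) : #S < #W := by
  obtain ⟨w, hw⟩ := hW
  have hcomp : Fintype.card V - #W + 1 ≤ numComponents S := by
    have hcard : Nat.card (Option {v // v ∉ W}) = Fintype.card V - #W + 1 := by
      rw [Nat.card_eq_fintype_card, Fintype.card_option, Fintype.card_subtype_compl,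
        Fintype.card_coe]
    rw [← hcard]
    refine card_le_numComponents_of_surjective
      (fun v => if hv : v ∈ W then none else some ⟨v, hv⟩) (fun a b hab => ?_) ?_
    · rcases hab.eq_or_mem_of_subset_sym2 hSW with rfl | ⟨ha, hb⟩
      · rfl
      · simp [ha, hb]
    · rintro (_ | ⟨v, hv⟩)
      · exact ⟨w, by simp [hw]⟩
      · exact ⟨v, by simp [hv]⟩
  have := card_le_univ W
  unfold IsForest at hS
  omega

end Forest

section Acyclic

open SimpleGraph

variable {S : Finset (Sym2 V)} {a b : V}

theorem linked_iff_reachable (hS : ∀ ε ∈ S, ¬ ε.IsDiag) :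
    Linked S a b ↔ (fromEdgeSet (S : Set (Sym2 V))).Reachable a b := by
  rw [reachable_iff_reflTransGen]
  refine ⟨Relation.ReflTransGen.mono (fun u v huv => ?_) _ _,
    Relation.ReflTransGen.mono (fun u v huv => ?_) _ _⟩
  · exact (fromEdgeSet_adj _).2 ⟨huv, fun h => hS _ huv (by simp [h])⟩
  · exact ((fromEdgeSet_adj _).1 huv).1

theorem isForest_iff_isAcyclic [Fintype V] [DecidableEq V] :
    IsForest S ↔ (∀ ε ∈ S, ¬ ε.IsDiag) ∧ (fromEdgeSet (S : Set (Sym2 V))).IsAcyclic := by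
  induction S using Finset.induction with
  | empty => simp
  | @insert ε S hε ih =>
    induction ε using Sym2.inductionOn with
    | hf x y =>
      have hsup : fromEdgeSet ((insert s(x, y) S : Finset (Sym2 V)) : Set (Sym2 V)) =
          fromEdgeSet ↑S ⊔ edge x y := by
        rw [coe_insert, Set.insert_eq, fromEdgeSet_union, sup_comm, edge]
      rw [isForest_insert_iff hε, ih, hsup, isAcyclic_sup_fromEdgeSet_iff, forall_mem_insert]
      by_cases hxy : x = y
      · subst hxy
        simp
      · have hadj : ¬ (fromEdgeSet (S : Set (Sym2 V))).Adj x y := fun h =>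
          hε ((fromEdgeSet_adj _).1 h).1
        simp only [hxy, hadj, Sym2.mk_isDiag_iff, not_false_eq_true, or_self, imp_false, true_and]
        constructor
        · rintro ⟨⟨hS, hac⟩, hl⟩
          exact ⟨hS, hac, fun h => hl ((linked_iff_reachable hS).2 h)⟩
        · rintro ⟨hS, hac, hr⟩
          exact ⟨⟨hS, hac⟩, fun h => hr ((linked_iff_reachable hS).1 h)⟩

end Acyclic

section Supermodular

variable [Fintype V] [DecidableEq V]

theorem numComponents_add_numComponents_insert_le {A B : Finset (Sym2 V)} (hAB : A ⊆ B)
    (ε : Sym2 V) :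
    numComponents B + numComponents (insert ε A) ≤
      numComponents A + numComponents (insert ε B) := by
  induction ε using Sym2.inductionOn with
  | hf x y =>
    by_cases hB : Linked B x y
    · rw [numComponents_insert_of_linked hB]
      have := numComponents_anti (subset_insert s(x, y) A)
      omega
    · have hA : ¬ Linked A x y := fun h => hB (h.mono hAB)
      have := numComponents_insert_of_not_linked hA
      have := numComponents_insert_of_not_linked hB
      omega

theorem numComponents_add_numComponents_union_le {A B : Finset (Sym2 V)} (hAB : A ⊆ B)
    (D : Finset (Sym2 V)) :
    numComponents B + numComponents (A ∪ D) ≤ numComponents A + numComponents (B ∪ D) := by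
  induction D using Finset.induction with
  | empty => simp [add_comm]
  | insert ε D _ ih =>
    rw [union_insert, union_insert]
    have := numComponents_add_numComponents_insert_le
      (union_subset_union_left hAB : A ∪ D ⊆ B ∪ D) ε
    omega

/-- Submodularity of the graphic rank `Fintype.card V - numComponents`. -/
theorem numComponents_add_numComponents_le (P Q : Finset (Sym2 V)) :
    numComponents P + numComponents Q ≤ numComponents (P ∩ Q) + numComponents (P ∪ Q) := by
  simpa [union_eq_right.2 inter_subset_right] using
    numComponents_add_numComponents_union_le (inter_subset_left (s₁ := P) (s₂ := Q)) Q

end Supermodular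

section Rado

variable [Fintype V] [DecidableEq V] {M : Type} {E : M → Finset (Sym2 V)} {d : ℤ}

/-- Rado's condition with deficiency `d` for the graphic matroid, whose rank function is
`|V| - numComponents`: every `F` has `|F| ≤ rank (⋃ f ∈ F, E f) + d`. -/
def RadoCondition (E : M → Finset (Sym2 V)) (d : ℤ) : Prop :=
  ∀ F : Finset M, (#F : ℤ) + numComponents (F.sup E) ≤ Fintype.card V + d

def IsForestTransversal (E : M → Finset (Sym2 V)) (F : Finset M) (e : M → Sym2 V) : Prop :=
  (∀ f ∈ F, e f ∈ E f) ∧ Set.InjOn e F ∧ IsForest (F.image e)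

theorem IsForestTransversal.mono {E' : M → Finset (Sym2 V)} {F : Finset M} {e : M → Sym2 V}
    (h : IsForestTransversal E F e) (hE : ∀ f, E f ⊆ E' f) : IsForestTransversal E' F e :=
  ⟨fun f hf => hE f (h.1 f hf), h.2⟩

theorem RadoCondition.mem_of_lt {X : M → Finset (Sym2 V)} {f₀ : M} {F : Finset M}
    (hE : RadoCondition E d) (hX : ∀ f ≠ f₀, X f = E f)
    (hF : (Fintype.card V : ℤ) + d < #F + numComponents (F.sup X)) : f₀ ∈ F := by
  by_contra hf₀
  rw [sup_congr rfl fun f hf => hX f (ne_of_mem_of_not_mem hf hf₀)] at hF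
  exact (hE F).not_gt hF

theorem RadoCondition.or_of_subset_union [DecidableEq M] {A B : M → Finset (Sym2 V)} {f₀ : M}
    (hE : RadoCondition E d) (hA : ∀ f ≠ f₀, A f = E f) (hB : ∀ f ≠ f₀, B f = E f)
    (hAB : E f₀ ⊆ A f₀ ∪ B f₀) : RadoCondition A d ∨ RadoCondition B d := by
  by_contra! h
  simp only [RadoCondition, not_forall, not_le] at h
  obtain ⟨⟨F₁, h₁⟩, ⟨F₂, h₂⟩⟩ := h
  have hf₁ := hE.mem_of_lt hA h₁
  have hf₂ := hE.mem_of_lt hB h₂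
  have hunion : (F₁ ∪ F₂).sup E ⊆ F₁.sup A ∪ F₂.sup B := by
    intro ε hε
    obtain ⟨f, hf, hεf⟩ := mem_sup.1 hε
    by_cases hff₀ : f = f₀
    · subst hff₀
      exact union_subset_union (le_sup hf₁) (le_sup hf₂) (hAB hεf)
    · rcases mem_union.1 hf with hf | hf
      · exact mem_union_left _ (mem_sup.2 ⟨f, hf, by rwa [hA f hff₀]⟩)
      · exact mem_union_right _ (mem_sup.2 ⟨f, hf, by rwa [hB f hff₀]⟩)
  have hinter : ((F₁ ∩ F₂).erase f₀).sup E ⊆ F₁.sup A ∩ F₂.sup B := by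
    intro ε hε
    obtain ⟨f, hf, hεf⟩ := mem_sup.1 hε
    obtain ⟨hff₀, hf⟩ := mem_erase.1 hf
    exact mem_inter.2 ⟨mem_sup.2 ⟨f, (mem_inter.1 hf).1, by rwa [hA f hff₀]⟩,
      mem_sup.2 ⟨f, (mem_inter.1 hf).2, by rwa [hB f hff₀]⟩⟩
  have := numComponents_add_numComponents_le (F₁.sup A) (F₂.sup B)
  have := numComponents_anti hunion
  have := numComponents_anti hinter
  have := hE (F₁ ∪ F₂)
  have := hE ((F₁ ∩ F₂).erase f₀)
  have := card_union_add_card_inter F₁ F₂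
  have := card_erase_add_one (mem_inter.2 ⟨hf₁, hf₂⟩)
  omega

theorem RadoCondition.exists_forestTransversal_of_card_le_one [Fintype M]
    (hE : RadoCondition E d) (hne : ∀ f, (E f).Nonempty) (hE₁ : ∀ f, #(E f) ≤ 1) :
    ∃ F e, IsForestTransversal E F e ∧ (Fintype.card M : ℤ) ≤ #F + d := by
  choose e he using fun f => card_eq_one.1 ((hE₁ f).antisymm (hne f).card_pos)
  obtain ⟨T, hTe, hT, hTc⟩ := exists_isForest_subset (univ.image e)
  obtain ⟨F, -, hinj, hFT⟩ :=
    exists_subset_injOn_image_eq_of_surjOn Set.univ T fun t ht => by simpa using hTe ht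
  refine ⟨F, e, ⟨fun f _ => by simp [he], hinj, hFT ▸ hT⟩, ?_⟩
  have := hE univ
  rw [show E = fun f => {e f} from funext he, sup_singleton_apply, card_univ] at this
  rw [← card_image_of_injOn hinj, hFT]
  unfold IsForest at hT
  omega

theorem RadoCondition.exists_update_erase [DecidableEq M] (hE : RadoCondition E d) {f₀ : M}
    (hf₀ : 1 < #(E f₀)) :
    ∃ z ∈ E f₀, RadoCondition (Function.update E f₀ ((E f₀).erase z)) d := by
  obtain ⟨x, hx, y, hy, hxy⟩ := one_lt_card.1 hf₀
  have hcover : E f₀ ⊆ (E f₀).erase x ∪ (E f₀).erase y := by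
    intro ε hε
    by_cases hεx : ε = x
    · exact mem_union_right _ (mem_erase.2 ⟨hεx ▸ hxy, hε⟩)
    · exact mem_union_left _ (mem_erase.2 ⟨hεx, hε⟩)
  rcases hE.or_of_subset_union (A := Function.update E f₀ ((E f₀).erase x))
      (B := Function.update E f₀ ((E f₀).erase y)) (fun f hf => Function.update_of_ne hf _ _)
      (fun f hf => Function.update_of_ne hf _ _)
      (by simp only [Function.update_self]; exact hcover) with h | h
  · exact ⟨x, hx, h⟩
  · exact ⟨y, hy, h⟩

/-- Rado's theorem with deficiency for the graphic matroid. -/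
theorem RadoCondition.exists_forestTransversal [Fintype M] [DecidableEq M]
    (hE : RadoCondition E d) (hne : ∀ f, (E f).Nonempty) :
    ∃ F e, IsForestTransversal E F e ∧ (Fintype.card M : ℤ) ≤ #F + d := by
  obtain ⟨n, hn⟩ : ∃ n, ∑ f, #(E f) = n := ⟨_, rfl⟩
  induction n using Nat.strong_induction_on generalizing E with
  | _ n ih =>
    obtain hE₁ | ⟨f₀, hf₀⟩ := forall_or_exists_not fun f => #(E f) ≤ 1
    · exact hE.exists_forestTransversal_of_card_le_one hne hE₁
    obtain ⟨z, hz, hE'⟩ := hE.exists_update_erase (not_le.1 hf₀)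
    set E' := Function.update E f₀ ((E f₀).erase z)
    have hne' : ∀ f, (E' f).Nonempty := by
      intro f
      by_cases hf : f = f₀
      · subst hf
        simpa [E'] using (erase_nonempty hz).2 (one_lt_card_iff_nontrivial.1 (not_le.1 hf₀))
      · simpa [E', hf] using hne f
    have hsub : ∀ f, E' f ⊆ E f := by
      intro f
      by_cases hf : f = f₀
      · subst hf
        simpa [E'] using erase_subset z (E f)
      · simp [E', hf]
    have hlt : ∑ f, #(E' f) < n := hn ▸
      sum_lt_sum (fun f _ => card_le_card (hsub f))
        ⟨f₀, mem_univ _, by simpa [E'] using card_erase_lt_of_mem hz⟩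
    obtain ⟨F, e, he, hcard⟩ := ih _ hlt hE' hne' rfl
    exact ⟨F, e, he.mono hsub, hcard⟩

end Rado

section Components

variable [Fintype V] [DecidableEq V]

noncomputable def componentPartition (S : Finset (Sym2 V)) : Finpartition (univ : Finset V) :=
  Finpartition.ofSetoid (linkedSetoid S)

theorem mem_part_componentPartition_iff {S : Finset (Sym2 V)} {a b : V} :
    b ∈ (componentPartition S).part a ↔ Linked S a b :=
  Finpartition.mem_part_ofSetoid_iff_rel

theorem card_componentPartition_parts (S : Finset (Sym2 V)) :
    #(componentPartition S).parts = numComponents S := by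
  set P := componentPartition S
  have hpart : ∀ a b, P.part a = P.part b ↔ Linked S a b := fun a b => by
    rw [← P.mem_part_iff_part_eq_part (mem_univ a) (mem_univ b), mem_part_componentPartition_iff]
    exact ⟨Linked.symm, Linked.symm⟩
  let φ : Quotient (linkedSetoid S) → P.parts :=
    Quotient.lift (fun a => ⟨P.part a, P.part_mem.2 (mem_univ a)⟩)
      fun a b h => Subtype.ext ((hpart a b).2 h)
  have hφ : φ.Bijective := by
    refine ⟨fun q q' h => ?_, fun ⟨W, hW⟩ => ?_⟩
    · induction q using Quotient.inductionOn
      induction q' using Quotient.inductionOn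
      exact Quotient.sound ((hpart _ _).1 (congrArg Subtype.val h))
    · obtain ⟨a, -, rfl⟩ := P.part_surjOn hW
      exact ⟨⟦a⟧, rfl⟩
  rw [numComponents, Nat.card_congr (Equiv.ofBijective φ hφ), Nat.card_eq_fintype_card,
    Fintype.card_coe]

theorem exists_mem_componentPartition_subset {S : Finset (Sym2 V)} {A : Finset V}
    (hA : A.Nonempty) (hlinked : ∀ a ∈ A, ∀ b ∈ A, Linked S a b) :
    ∃ W ∈ (componentPartition S).parts, A ⊆ W := by
  obtain ⟨a, ha⟩ := hA
  exact ⟨_, (componentPartition S).part_mem.2 (mem_univ a),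
    fun b hb => mem_part_componentPartition_iff.2 (hlinked a ha b hb)⟩

end Components

end ForestRep

open ForestRep

section Duality

variable {U M : Type} [Fintype U] [DecidableEq U] {Uf : M → Finset U}

theorem isFRS_iff_isForestTransversal {F : Finset M} {e : M → Sym2 U} :
    IsFRS Uf F e ↔ IsForestTransversal (fun f => (Uf f).sym2) F e := by
  have hset : {s | ∃ f ∈ F, e f = s} = ((F.image e : Finset (Sym2 U)) : Set (Sym2 U)) := by
    ext; simp
  rw [IsFRS, IsForestTransversal, isForest_iff_isAcyclic, forall_mem_image, hset]
  simp only [mem_sym2_iff]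
  constructor
  · rintro ⟨h, hinj, hac⟩
    exact ⟨fun f hf => (h f hf).2, hinj, fun f hf => (h f hf).1, hac⟩
  · rintro ⟨h, hinj, hdiag, hac⟩
    exact ⟨fun f hf => ⟨hdiag hf, h f hf⟩, hinj, hac⟩

def partitionValue [Fintype M] (Uf : M → Finset U) (𝒲 : Finset (Finset U)) : ℤ :=
  Fintype.card M - ∑ W ∈ 𝒲, ((#{f | Uf f ⊆ W} : ℤ) - (#W - 1))

theorem IsFRS.card_filter_subset_lt {F : Finset M} {e : M → Sym2 U} (h : IsFRS Uf F e)
    {W : Finset U} (hW : W.Nonempty) : #{f ∈ F | Uf f ⊆ W} < #W := by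
  obtain ⟨hmem, hinj, hforest⟩ := isFRS_iff_isForestTransversal.1 h
  have hsub : {f ∈ F | Uf f ⊆ W} ⊆ F := filter_subset _ _
  rw [← card_image_of_injOn (hinj.mono (by exact_mod_cast hsub))]
  refine (hforest.mono (image_subset_image hsub)).card_lt_card hW ?_
  simp only [image_subset_iff, mem_filter]
  exact fun f ⟨hf, hfW⟩ => sym2_mono hfW (hmem f hf)

theorem sum_card_filter_subset_le [DecidableEq M] (hne : ∀ f, (Uf f).Nonempty)
    (P : Finpartition (univ : Finset U)) (s : Finset M) :
    ∑ W ∈ P.parts, #{f ∈ s | Uf f ⊆ W} ≤ #s := by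
  rw [← card_biUnion]
  · exact card_le_card (biUnion_subset.2 fun _ _ => filter_subset _ _)
  · intro W hW W' hW' hWW'
    refine disjoint_left.2 fun f hf hf' => ?_
    obtain ⟨u, hu⟩ := hne f
    exact disjoint_left.1 (P.disjoint hW hW' hWW') ((mem_filter.1 hf).2 hu)
      ((mem_filter.1 hf').2 hu)

/-- Weak duality: a forest has fewer than `|W|` edges inside each part `W`, and every other
member of the family lies inside at most one part. -/
theorem IsFRS.card_le_partitionValue [Fintype M] [DecidableEq M]
    (hne : ∀ f, (Uf f).Nonempty) {F : Finset M} {e : M → Sym2 U} (h : IsFRS Uf F e)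
    (P : Finpartition (univ : Finset U)) :
    (#F : ℤ) ≤ partitionValue Uf P.parts := by
  have hsplit : ∀ W : Finset U,
      #{f | Uf f ⊆ W} = #{f ∈ F | Uf f ⊆ W} + #{f ∈ Fᶜ | Uf f ⊆ W} := fun W => by
    rw [← card_union_of_disjoint (disjoint_compl_right.mono (filter_subset _ _)
      (filter_subset _ _)), ← filter_union, union_compl]
  have hpart : ∀ W ∈ P.parts, ((#{f | Uf f ⊆ W} : ℕ) : ℤ) - (#W - 1) ≤ #{f ∈ Fᶜ | Uf f ⊆ W} :=
    fun W hW => by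
      have := h.card_filter_subset_lt (P.nonempty_of_mem_parts hW)
      rw [hsplit]
      omega
  calc (#F : ℤ) = Fintype.card M - (Fintype.card M - #F : ℕ) := by
        rw [Nat.cast_sub (card_le_univ F)]; ring
    _ ≤ Fintype.card M - (∑ W ∈ P.parts, #{f ∈ Fᶜ | Uf f ⊆ W} : ℕ) := by
        gcongr
        rw [← card_compl]
        exact sum_card_filter_subset_le hne P Fᶜ
    _ ≤ partitionValue Uf P.parts := by
        unfold partitionValue
        push_cast
        gcongr with W hW
        exact hpart W hW

theorem partitionValue_componentPartition_le [Fintype M] [DecidableEq M]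
    (hne : ∀ f, (Uf f).Nonempty) (F : Finset M) :
    partitionValue Uf (componentPartition (F.sup fun f => (Uf f).sym2)).parts ≤
      Fintype.card M - #F + Fintype.card U - numComponents (F.sup fun f => (Uf f).sym2) := by
  set S := F.sup fun f => (Uf f).sym2
  set P := componentPartition S
  have hcover : F ⊆ P.parts.biUnion fun W => {f | Uf f ⊆ W} := by
    intro f hf
    obtain ⟨W, hW, hfW⟩ := exists_mem_componentPartition_subset (S := S) (hne f)
      fun a ha b hb => .of_mem <|
        le_sup (f := fun f => (Uf f).sym2) hf (mk_mem_sym2_iff.2 ⟨ha, hb⟩)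
    exact mem_biUnion.2 ⟨W, hW, mem_filter.2 ⟨mem_univ f, hfW⟩⟩
  have hF := (card_le_card hcover).trans card_biUnion_le
  have hU := P.sum_card_parts
  have hP := card_componentPartition_parts S
  rw [card_univ] at hU
  simp only [partitionValue, sum_sub_distrib, sum_const, nsmul_eq_mul, mul_one]
  have hF' : (#F : ℤ) ≤ ∑ W ∈ P.parts, (#{f | Uf f ⊆ W} : ℤ) := by exact_mod_cast hF
  have hU' : ∑ W ∈ P.parts, (#W : ℤ) = Fintype.card U := by exact_mod_cast hU
  rw [hU', hP]
  linarith

theorem exists_isFRS_partitionValue_le_card [Fintype M] [DecidableEq M]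
    (hne : ∀ f, (Uf f).Nonempty) (P : Finpartition (univ : Finset U))
    (hP : ∀ Q : Finpartition (univ : Finset U),
      partitionValue Uf P.parts ≤ partitionValue Uf Q.parts) :
    ∃ F e, IsFRS Uf F e ∧ partitionValue Uf P.parts ≤ #F := by
  have hE : RadoCondition (fun f => (Uf f).sym2) (Fintype.card M - partitionValue Uf P.parts) :=
    fun F => by
      have := hP (componentPartition (F.sup fun f => (Uf f).sym2))
      have := partitionValue_componentPartition_le hne F
      linarith
  obtain ⟨F, e, he, hcard⟩ := hE.exists_forestTransversal fun f => sym2_nonempty.2 (hne f)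
  exact ⟨F, e, isFRS_iff_isForestTransversal.2 he, by linarith⟩

end Duality

theorem stmt_11 {U M : Type} [Fintype U] [Fintype M] [DecidableEq U] [DecidableEq M]
    (Uf : M → Finset U) (hne : ∀ f, (Uf f).Nonempty) :
    ∃ n : ℕ,
      IsGreatest {k | ∃ (F : Finset M) (e : M → Sym2 U), IsFRS Uf F e ∧ F.card = k} n ∧
      IsLeast {z : ℤ | ∃ 𝒲 : Finset (Finset U),
        ((∀ W ∈ 𝒲, W.Nonempty) ∧ ∀ x : U, ∃! W, W ∈ 𝒲 ∧ x ∈ W) ∧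
        z = (Fintype.card M : ℤ) - ∑ W ∈ 𝒲,
          (((Finset.univ.filter fun f => Uf f ⊆ W).card : ℤ) - ((W.card : ℤ) - 1))}
        (n : ℤ) := by
  obtain ⟨P, hP⟩ := Finite.exists_min fun P : Finpartition (univ : Finset U) =>
    partitionValue Uf P.parts
  obtain ⟨F, e, hF, hPF⟩ := exists_isFRS_partitionValue_le_card hne P hP
  refine ⟨#F, ⟨⟨F, e, hF, rfl⟩, ?_⟩, ⟨⟨P.parts, ⟨fun W hW => P.nonempty_of_mem_parts hW,
    fun x => P.existsUnique_mem (mem_univ x)⟩, ?_⟩, ?_⟩⟩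
  · rintro _ ⟨F', e', hF', rfl⟩
    exact_mod_cast (hF'.card_le_partitionValue hne P).trans hPF
  · exact le_antisymm (hF.card_le_partitionValue hne P) hPF
  · rintro _ ⟨𝒲, ⟨h𝒲, h𝒲'⟩, rfl⟩
    exact hF.card_le_partitionValue hne (.ofExistsUnique 𝒲 (fun _ _ => subset_univ _)
      (fun x _ => h𝒲' x) fun h => by simpa using h𝒲 ∅ h)
end

section
/- Let U and M be finite sets with U_f ⊆ U for f ∈ M. Given F ⊆ M with a forest representative system, call a set W ⊆ U F-closed if |{f ∈ F : U_f ⊆ W}| = |W| - 1. Then the union of two F-closed sets with nonempty intersection is F-closed, every singleton is F-closed, and hence the maximal F-closed sets form a partition of U. -/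
/-!
The edges `e f` with `Uf f ⊆ W` form a forest on the vertex set `W`, so there are at most
`|W| - 1` of them: `W` is `F`-closed exactly when this bound is attained. If `W₁` and `W₂` are
closed and meet, inclusion–exclusion for the vertex sets and for the index sets, together with the
bound on `W₁ ∩ W₂`, forces the bound on `W₁ ∪ W₂` to be attained. Two maximal closed sets sharing
a point therefore have a closed union, so they coincide.
-/

open Finset
open scoped Classical

/-- `W` is `F`-closed: the number of `f ∈ F` with `Uf f ⊆ W` equals `|W| - 1`. -/
def FClosed {U M : Type} [DecidableEq U] [DecidableEq M] (Uf : M → Finset U)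
    (F : Finset M) (W : Finset U) : Prop :=
  (F.filter fun f => Uf f ⊆ W).card + 1 = W.card

namespace SimpleGraph

variable {V : Type*} {G : SimpleGraph V}

theorem IsAcyclic.ncard_edgeSet_add_one_le [Finite V] [Nonempty V] (hG : G.IsAcyclic) :
    G.edgeSet.ncard + 1 ≤ Nat.card V := by
  obtain ⟨T, hGT, -, hT⟩ := connected_top.exists_isTree_le_of_le_of_isAcyclic le_top hG
  calc G.edgeSet.ncard + 1 ≤ T.edgeSet.ncard + 1 :=
        Nat.add_le_add_right (Set.ncard_le_ncard (edgeSet_mono hGT)) 1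
    _ = Nat.card V := by
        rw [← Nat.card_coe_set_eq]
        exact (isTree_iff_connected_and_card.mp hT).2

theorem IsAcyclic.ncard_add_one_le_of_subset_edgeSet (hG : G.IsAcyclic) {S : Set V}
    (hS : S.Finite) (hne : S.Nonempty) {E : Set (Sym2 V)} (hEG : E ⊆ G.edgeSet)
    (hES : ∀ e ∈ E, ∀ v ∈ e, v ∈ S) : E.ncard + 1 ≤ S.ncard := by
  set H := (⊤ : G.Subgraph).induce S
  have : Nonempty H.verts := hne.to_subtype
  have : Finite H.verts := hS.to_subtype
  have hEH : E ⊆ H.edgeSet := by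
    intro e he
    induction e using Sym2.ind with
    | _ u v => exact ⟨hES _ he u (Sym2.mem_mk_left u v), hES _ he v (Sym2.mem_mk_right u v), hEG he⟩
  have hinj : Function.Injective (Sym2.map ((↑) : H.verts → V)) :=
    Sym2.map.injective Subtype.val_injective
  calc E.ncard + 1 ≤ H.edgeSet.ncard + 1 :=
        Nat.add_le_add_right
          (Set.ncard_le_ncard hEH (H.image_coe_edgeSet_coe ▸ (Set.toFinite _).image _)) 1
    _ = H.coe.edgeSet.ncard + 1 := by
        rw [← H.image_coe_edgeSet_coe, Set.ncard_image_of_injective _ hinj]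
    _ ≤ Nat.card H.verts := (hG.subgraph H).ncard_edgeSet_add_one_le
    _ = S.ncard := Nat.card_coe_set_eq S

end SimpleGraph

theorem Finset.existsUnique_maximal_mem {α : Type*} [Finite α] [DecidableEq α]
    {P : Finset α → Prop} (hunion : ∀ s t, P s → P t → (s ∩ t).Nonempty → P (s ∪ t))
    (hsingleton : ∀ x, P {x}) (x : α) :
    ∃! s : Finset α, (P s ∧ ∀ t, P t → s ⊆ t → s = t) ∧ x ∈ s := by
  obtain ⟨s, hxs, hs⟩ := Finite.exists_le_maximal (hsingleton x)
  have hsmax : ∀ t, P t → s ⊆ t → s = t := fun t ht hst => le_antisymm hst (hs.2 ht hst)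
  have hxs : x ∈ s := singleton_subset_iff.mp hxs
  refine ⟨s, ⟨⟨hs.1, hsmax⟩, hxs⟩, ?_⟩
  rintro t ⟨⟨ht, htmax⟩, hxt⟩
  have hts : P (t ∪ s) := hunion t s ht hs.1 ⟨x, mem_inter.mpr ⟨hxt, hxs⟩⟩
  exact (htmax _ hts subset_union_left).trans (hsmax _ hts subset_union_right).symm

namespace IsFRS

variable {U M : Type} [DecidableEq U] {Uf : M → Finset U} {F : Finset M} {e : M → Sym2 U}

theorem card_filter_add_one_le (h : IsFRS Uf F e) {W : Finset U} (hW : W.Nonempty) :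
    #{f ∈ F | Uf f ⊆ W} + 1 ≤ #W := by
  obtain ⟨hedge, hinj, hacyclic⟩ := h
  set E := e '' ↑{f ∈ F | Uf f ⊆ W}
  have hEG : E ⊆ (SimpleGraph.fromEdgeSet {s | ∃ f ∈ F, e f = s}).edgeSet := by
    rintro _ ⟨f, hf, rfl⟩
    have hfF := (mem_filter.mp hf).1
    exact SimpleGraph.edgeSet_fromEdgeSet _ ▸ ⟨⟨f, hfF, rfl⟩, (hedge f hfF).1⟩
  have hEW : ∀ s ∈ E, ∀ v ∈ s, v ∈ (W : Set U) := by
    rintro _ ⟨f, hf, rfl⟩ v hv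
    exact (mem_filter.mp hf).2 ((hedge f (mem_filter.mp hf).1).2 v hv)
  calc #{f ∈ F | Uf f ⊆ W} + 1 = E.ncard + 1 := by
        rw [(hinj.mono (coe_subset.mpr (filter_subset _ F))).ncard_image, Set.ncard_coe_finset]
    _ ≤ (W : Set U).ncard :=
        hacyclic.ncard_add_one_le_of_subset_edgeSet W.finite_toSet (coe_nonempty.mpr hW) hEG hEW
    _ = #W := Set.ncard_coe_finset W

variable [DecidableEq M]

theorem fClosed_singleton (h : IsFRS Uf F e) (x : U) : FClosed Uf F {x} := by
  have := h.card_filter_add_one_le (singleton_nonempty x)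
  rw [card_singleton] at this
  rw [FClosed, card_singleton]
  omega

theorem fClosed_union (h : IsFRS Uf F e) {W₁ W₂ : Finset U} (h₁ : FClosed Uf F W₁)
    (h₂ : FClosed Uf F W₂) (hne : (W₁ ∩ W₂).Nonempty) : FClosed Uf F (W₁ ∪ W₂) := by
  have hinter_le := h.card_filter_add_one_le hne
  have hunion_le :=
    h.card_filter_add_one_le (W := W₁ ∪ W₂) (hne.mono (inter_subset_left.trans subset_union_left))
  have hinter : {f ∈ F | Uf f ⊆ W₁ ∩ W₂} = {f ∈ F | Uf f ⊆ W₁} ∩ {f ∈ F | Uf f ⊆ W₂} := by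
    simp only [subset_inter_iff, filter_and]
  have hunion : {f ∈ F | Uf f ⊆ W₁} ∪ {f ∈ F | Uf f ⊆ W₂} ⊆ {f ∈ F | Uf f ⊆ W₁ ∪ W₂} := by
    rw [← filter_or]
    exact monotone_filter_right _
      fun _ _ hf => hf.elim (·.trans subset_union_left) (·.trans subset_union_right)
  have hcardW := card_union_add_card_inter W₁ W₂
  have hcardF := card_union_add_card_inter {f ∈ F | Uf f ⊆ W₁} {f ∈ F | Uf f ⊆ W₂}
  have hcard_le := card_le_card hunion
  rw [hinter] at hinter_le
  unfold FClosed at *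
  omega

end IsFRS

theorem stmt_12_general {U M : Type} [Fintype U] [DecidableEq U] [DecidableEq M]
    (Uf : M → Finset U) (F : Finset M) (e : M → Sym2 U) (h : IsFRS Uf F e) :
    (∀ W1 W2 : Finset U, FClosed Uf F W1 → FClosed Uf F W2 →
      (W1 ∩ W2).Nonempty → FClosed Uf F (W1 ∪ W2)) ∧
    (∀ x : U, FClosed Uf F {x}) ∧
    (∀ x : U, ∃! W : Finset U,
      (FClosed Uf F W ∧ ∀ W' : Finset U, FClosed Uf F W' → W ⊆ W' → W = W') ∧ x ∈ W) :=
  ⟨fun _ _ => h.fClosed_union, h.fClosed_singleton,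
    existsUnique_maximal_mem (fun _ _ => h.fClosed_union) h.fClosed_singleton⟩

theorem stmt_12 {U M : Type} [Fintype U] [Fintype M] [DecidableEq U] [DecidableEq M]
    (Uf : M → Finset U) (F : Finset M) (e : M → Sym2 U) (h : IsFRS Uf F e) :
    (∀ W1 W2 : Finset U, FClosed Uf F W1 → FClosed Uf F W2 →
      (W1 ∩ W2).Nonempty → FClosed Uf F (W1 ∪ W2)) ∧
    (∀ x : U, FClosed Uf F {x}) ∧
    (∀ x : U, ∃! W : Finset U,
      (FClosed Uf F W ∧ ∀ W' : Finset U, FClosed Uf F W' → W ⊆ W' → W = W') ∧ x ∈ W) :=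
  stmt_12_general Uf F e h
end

section
/- The subsets F of a hypergraph's edge set M for which the family (U_f)_{f∈F} admits a forest representative system form the independent sets of a matroid on M. -/
/-!
A forest with `n` edges on a finite vertex set `U` has exactly `|U| - n` connected components.
Hence if one forest has more edges than another, some edge of the larger one joins two components
of the smaller one, and adding it keeps the smaller one acyclic: forests satisfy the augmentation
axiom.

For representative systems `e` of `F` and `e'` of `G` with `|F| < |G|`, this yields `m ∈ G` such
that `e' m` can be added to the forest of `e`. If `m ∉ F`, redefining `e` at `m` gives a system
for `F ∪ {m}`. If `m ∈ F`, the same redefinition gives a system for `F` that disagrees with `e'`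
at fewer elements, so induction on the number of disagreements finishes the argument.
-/

open Finset
open scoped Classical

namespace SimpleGraph

variable {V : Type*} {G G' : SimpleGraph V} {u v : V}

theorem Reachable.eq_of_forall_adj {β : Sort*} {f : V → β}
    (hf : ∀ x y, G.Adj x y → f x = f y) (h : G.Reachable u v) : f u = f v := by
  obtain ⟨p⟩ := h
  induction p with
  | nil => rfl
  | cons hxy _ ih => exact (hf _ _ hxy).trans ih

theorem card_connectedComponent_bot :
    Nat.card (⊥ : SimpleGraph V).ConnectedComponent = Nat.card V :=
  (Nat.card_eq_of_bijective _
    ⟨fun _ _ h ↦ reachable_bot.mp (ConnectedComponent.exact h), Quot.mk_surjective⟩).symm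

theorem card_connectedComponent_le_of_forall_adj_reachable [Finite V]
    (h : ∀ x y, G'.Adj x y → G.Reachable x y) :
    Nat.card G.ConnectedComponent ≤ Nat.card G'.ConnectedComponent := by
  refine Nat.card_le_card_of_surjective
    (ConnectedComponent.lift G.connectedComponentMk fun x y p _ ↦ ?_) ?_
  · exact p.reachable.eq_of_forall_adj fun a b hab ↦ ConnectedComponent.sound (h a b hab)
  · exact Quot.ind fun x ↦ ⟨G'.connectedComponentMk x, rfl⟩

theorem card_connectedComponent_sup_edge [Finite V] (h : ¬G.Reachable u v) :
    Nat.card (G ⊔ edge u v).ConnectedComponent + 1 = Nat.card G.ConnectedComponent := by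
  have huv : u ≠ v := by rintro rfl; exact h .rfl
  set π : G.ConnectedComponent → (G ⊔ edge u v).ConnectedComponent :=
    ConnectedComponent.map (Hom.ofLE le_sup_left)
  have hπ : π (G.connectedComponentMk v) = π (G.connectedComponentMk u) :=
    ConnectedComponent.sound (Adj.reachable (by simp [edge_adj, huv.symm]))
  -- a left inverse of `π` away from the component of `v`
  set retract : V → G.ConnectedComponent := fun x ↦
    if G.connectedComponentMk x = G.connectedComponentMk v then G.connectedComponentMk u
    else G.connectedComponentMk x
  have hretract : ∀ x y, (G ⊔ edge u v).Adj x y → retract x = retract y := by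
    rintro x y (hxy | hxy)
    · simp only [retract, ConnectedComponent.connectedComponentMk_eq_of_adj hxy]
    · rw [edge_adj] at hxy
      rcases hxy.1 with ⟨rfl, rfl⟩ | ⟨rfl, rfl⟩ <;> simp [retract]
  have hbij : Function.Bijective fun c : {c // c ≠ G.connectedComponentMk v} ↦ π c := by
    constructor
    · rintro ⟨c, hc⟩ ⟨d, hd⟩ hcd
      induction c using ConnectedComponent.ind with | _ x => ?_
      induction d using ConnectedComponent.ind with | _ y => ?_
      have : retract x = retract y := (ConnectedComponent.exact hcd).eq_of_forall_adj hretract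
      simpa only [retract, if_neg hc, if_neg hd, Subtype.mk.injEq] using this
    · intro c
      induction c using ConnectedComponent.ind with | _ x => ?_
      by_cases hx : G.connectedComponentMk x = G.connectedComponentMk v
      · refine ⟨⟨G.connectedComponentMk u, fun h' ↦ h (ConnectedComponent.exact h')⟩, ?_⟩
        change π _ = π (G.connectedComponentMk x)
        rw [hx, hπ]
      · exact ⟨⟨_, hx⟩, rfl⟩
  rw [← Nat.card_eq_of_bijective _ hbij, ← Finite.card_option,
    Nat.card_congr (Equiv.optionSubtypeNe _)]

theorem IsAcyclic.card_edgeSet_add_card_connectedComponent [Finite V] (hG : G.IsAcyclic) :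
    Nat.card G.edgeSet + Nat.card G.ConnectedComponent = Nat.card V := by
  induction hn : Nat.card G.edgeSet generalizing G with
  | zero =>
    rw [Nat.card_coe_set_eq, Set.ncard_eq_zero, edgeSet_eq_empty] at hn
    rw [hn, zero_add, card_connectedComponent_bot]
  | succ n ih =>
    obtain ⟨e, he⟩ : G.edgeSet.Nonempty := by
      rw [Nat.card_coe_set_eq] at hn
      exact Set.nonempty_of_ncard_ne_zero (by omega)
    induction e using Sym2.ind with | _ x y => ?_
    have hnr : ¬(G \ edge x y).Reachable x y := isAcyclic_iff_forall_adj_isBridge.mp hG he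
    have hcard : Nat.card (G \ edge x y).edgeSet = n := by
      rw [edgeSet_sdiff, edgeSet_edge_of_ne he.ne, Nat.card_coe_set_eq,
        Set.ncard_sdiff_singleton_of_mem he, ← Nat.card_coe_set_eq, hn, Nat.add_sub_cancel]
    have hmerge := card_connectedComponent_sup_edge hnr
    rw [sdiff_sup_cancel (G.edge_le_iff.mpr (.inr he))] at hmerge
    have := ih (hG.anti sdiff_le) hcard
    omega

theorem IsAcyclic.exists_adj_not_reachable [Finite V] (hG : G.IsAcyclic) (hG' : G'.IsAcyclic)
    (h : Nat.card G.edgeSet < Nat.card G'.edgeSet) : ∃ x y, G'.Adj x y ∧ ¬G.Reachable x y := by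
  by_contra! hcon
  have := card_connectedComponent_le_of_forall_adj_reachable hcon
  have := hG.card_edgeSet_add_card_connectedComponent
  have := hG'.card_edgeSet_add_card_connectedComponent
  omega

end SimpleGraph

section ForestRepresentativeSystem

open SimpleGraph

variable {U M : Type} {F G : Finset M} {e e' : M → Sym2 U} {m : M} {x y : U}

def repGraph (F : Finset M) (e : M → Sym2 U) : SimpleGraph U :=
  fromEdgeSet {s | ∃ f ∈ F, e f = s}

theorem repGraph_mono (hFG : F ⊆ G) : repGraph F e ≤ repGraph G e :=
  fromEdgeSet_mono fun _ ⟨f, hf, hfs⟩ ↦ ⟨f, hFG hf, hfs⟩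

variable [DecidableEq U] {Uf : M → Finset U}

theorem IsFRS.isAcyclic (h : IsFRS Uf F e) : (repGraph F e).IsAcyclic := h.2.2

theorem isFRS_empty (e : M → Sym2 U) : IsFRS Uf ∅ e :=
  ⟨by simp, by simp, by simp⟩

theorem IsFRS.mono (h : IsFRS Uf G e) (hFG : F ⊆ G) : IsFRS Uf F e :=
  ⟨fun f hf ↦ h.1 f (hFG hf), h.2.1.mono (coe_subset.mpr hFG),
    h.isAcyclic.anti (repGraph_mono hFG)⟩

theorem IsFRS.card_edgeSet (h : IsFRS Uf F e) : Nat.card (repGraph F e).edgeSet = #F := by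
  have hdiag : {s | ∃ f ∈ F, e f = s} \ Sym2.diagSet = e '' F := by
    ext s
    simp only [Set.mem_sdiff, Set.mem_ofPred_eq, Sym2.mem_diagSet, Set.mem_image, mem_coe]
    exact ⟨fun h' ↦ h'.1,
      fun ⟨f, hf, hfs⟩ ↦ ⟨⟨f, hf, hfs⟩, hfs ▸ (h.1 f hf).1⟩⟩
  rw [repGraph, edgeSet_fromEdgeSet, hdiag, Nat.card_coe_set_eq, h.2.1.ncard_image,
    Set.ncard_coe_finset]

theorem IsFRS.ne_of_not_reachable (h : IsFRS Uf F e) {f : M} (hf : f ∈ F)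
    (hr : ¬(repGraph F e).Reachable x y) : e f ≠ s(x, y) := by
  intro hfxy
  refine hr (Adj.reachable ((fromEdgeSet_adj _).mpr ⟨⟨f, hf, hfxy⟩, ?_⟩))
  rintro rfl
  exact (h.1 f hf).1 (hfxy ▸ Sym2.mk_isDiag_iff.mpr rfl)

theorem IsFRS.insert_update (h : IsFRS Uf F e) (hx : x ∈ Uf m) (hy : y ∈ Uf m)
    (hr : ¬(repGraph F e).Reachable x y) :
    IsFRS Uf (insert m F) (Function.update e m s(x, y)) := by
  have hxy : x ≠ y := by rintro rfl; exact hr .rfl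
  refine ⟨?_, ?_, ?_⟩
  · intro f hf
    rcases eq_or_ne f m with rfl | hfm
    · simp [hxy, hx, hy]
    · rw [Function.update_of_ne hfm]
      exact h.1 f ((mem_insert.mp hf).resolve_left hfm)
  · rw [coe_insert, ← Set.insert_sdiff_singleton, Set.injOn_insert fun h' ↦ h'.2 rfl]
    refine ⟨(h.2.1.mono Set.sdiff_subset).congr
      fun f hf ↦ (Function.update_of_ne hf.2 _ _).symm, ?_⟩
    rintro ⟨f, hf, hfm⟩
    rw [Function.update_self, Function.update_of_ne hf.2] at hfm
    exact h.ne_of_not_reachable hf.1 hr hfm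
  · refine (h.isAcyclic.sup_edge_of_not_reachable hr).anti ?_
    rw [repGraph, edge, ← fromEdgeSet_union]
    refine fromEdgeSet_mono ?_
    rintro s ⟨f, hf, rfl⟩
    rcases eq_or_ne f m with rfl | hfm
    · simp
    · exact .inl ⟨f, (mem_insert.mp hf).resolve_left hfm, (Function.update_of_ne hfm _ _).symm⟩

theorem IsFRS.exists_insert_of_card_lt [Finite U] (hF : IsFRS Uf F e) (hG : IsFRS Uf G e')
    (hlt : #F < #G) : ∃ m ∈ G, m ∉ F ∧ ∃ e'', IsFRS Uf (insert m F) e'' := by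
  induction hk : #{f ∈ F | e f ≠ e' f} using Nat.strong_induction_on generalizing e with
  | _ k ih =>
    obtain ⟨x, y, hadj, hr⟩ := hF.isAcyclic.exists_adj_not_reachable hG.isAcyclic
      (by rwa [hF.card_edgeSet, hG.card_edgeSet])
    obtain ⟨⟨m, hmG, hm⟩, -⟩ := (fromEdgeSet_adj _).mp hadj
    have hxy : ∀ z ∈ s(x, y), z ∈ Uf m := hm ▸ (hG.1 m hmG).2
    have hF' := hF.insert_update (hxy x (Sym2.mem_mk_left x y)) (hxy y (Sym2.mem_mk_right x y)) hr
    by_cases hmF : m ∈ F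
    · rw [insert_eq_of_mem hmF] at hF'
      refine ih _ ?_ hF' rfl
      rw [← hk]
      refine card_lt_card ((ssubset_iff_of_subset ?_).mpr ⟨m, ?_, ?_⟩)
      · intro f hf
        rw [mem_filter] at hf ⊢
        rcases eq_or_ne f m with rfl | hfm
        · simp [hm] at hf
        · rwa [Function.update_of_ne hfm] at hf
      · simp [hmF, hm, hF.ne_of_not_reachable hmF hr]
      · simp [hm]
    · exact ⟨m, hmG, hmF, _, hF'⟩

end ForestRepresentativeSystem

theorem stmt_13_general {U M : Type} [Fintype U] [DecidableEq U]
    (Uf : M → Finset U) (hne : ∀ f, (Uf f).Nonempty) :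
    ∃ Mat : Matroid M, Mat.E = Set.univ ∧
      ∀ F : Finset M, (Mat.Indep ↑F ↔ ∃ e : M → Sym2 U, IsFRS Uf F e) := by
  refine ⟨(IndepMatroid.ofFinset Set.univ (fun F ↦ ∃ e : M → Sym2 U, IsFRS Uf F e)
    ⟨fun f ↦ Sym2.diag (hne f).choose, isFRS_empty _⟩
    (fun _ _ ⟨e, he⟩ hFG ↦ ⟨e, he.mono hFG⟩)
    (fun _ _ ⟨_, hF⟩ ⟨_, hG⟩ hlt ↦ hF.exists_insert_of_card_lt hG hlt)
    (fun _ _ ↦ Set.subset_univ _)).matroid, rfl, fun F ↦ ?_⟩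
  rw [IndepMatroid.matroid_indep_iff, IndepMatroid.ofFinset_indep]

theorem stmt_13 {U M : Type} [Fintype U] [Fintype M] [DecidableEq U] [DecidableEq M]
    (Uf : M → Finset U) (hne : ∀ f, (Uf f).Nonempty) :
    ∃ Mat : Matroid M, Mat.E = Set.univ ∧
      ∀ F : Finset M, (Mat.Indep ↑F ↔ ∃ e : M → Sym2 U, IsFRS Uf F e) :=
  stmt_13_general Uf hne
end

section
/- Let G be a connected graph, T ⊆ V(G) with |T| even, and M an eardrum in G with V_M ∩ T = ∅ and 𝒫_f ≠ ∅ for all f ∈ M. Then every connected-T-join of G has at least |V(G)| - 1 + |M| - μ(G,M) edges. -/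
open Finset
open scoped Classical

namespace MGraph

variable {V E : Type} [Fintype V] [Fintype E] [DecidableEq V] [DecidableEq E]

/-- The vertex set of an eardrum. -/
def VM (M : Finset (Finset V)) : Finset V := M.biUnion id

/-- `M` is an eardrum in `G`: the set of components of an induced subgraph of
maximum degree at most one. -/
def IsEardrum (G : MGraph V E) (M : Finset (Finset V)) : Prop :=
  (∀ f ∈ M, ∀ g ∈ M, f ≠ g → Disjoint f g) ∧
  (∀ f ∈ M, f.card = 1 ∨ f.card = 2) ∧
  (∀ f ∈ M, ∀ x ∈ f, ∀ y ∈ f, x ≠ y → ∃ e, G.ends e = s(x, y)) ∧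
  (∀ e : E, (∀ x ∈ G.ends e, x ∈ VM M) → ∃ f ∈ M, ∀ x ∈ G.ends e, x ∈ f)

/-- `P` is a path in `G` whose set of internal vertices is exactly `f`. -/
def IsPathInn (G : MGraph V E) (f : Finset V) (P : Ear V E) : Prop :=
  P.1.length = P.2.length + 1 ∧ P.1.Nodup ∧ P.2.Nodup ∧
  (∀ i : ℕ, ∀ h : i < P.2.length, ∃ a b : V,
    P.1[i]? = some a ∧ P.1[i + 1]? = some b ∧ G.ends (P.2.get ⟨i, h⟩) = s(a, b)) ∧
  innFinset P = f

/-- The edge set `A` forms a forest: every nonempty subset has a vertex of degree one. -/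
def IsForest (G : MGraph V E) (A : Finset E) : Prop :=
  ∀ B ⊆ A, B.Nonempty → ∃ v : V, (B.filter fun e => v ∈ G.ends e).card = 1

/-- An earmuff for the eardrum `M`: paths `P f` with internal vertex set `f` for
`f ∈ F ⊆ M`, whose union of edge sets forms a forest. -/
def IsEarmuff (G : MGraph V E) (M F : Finset (Finset V)) (P : Finset V → Ear V E) : Prop :=
  F ⊆ M ∧ (∀ f ∈ F, G.IsPathInn f (P f)) ∧
  G.IsForest (F.biUnion fun f => (P f).2.toFinset)

/-- `μ(G,M)`: the maximum size of an earmuff for `M` in `G`. -/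
noncomputable def mu (G : MGraph V E) (M : Finset (Finset V)) : ℕ :=
  sSup {k | ∃ (F : Finset (Finset V)) (P : Finset V → Ear V E),
    G.IsEarmuff M F P ∧ F.card = k}
end MGraph

/-!
In a connected-`T`-join every vertex of `V_M` has even positive degree, hence degree at least
two. Deleting a copy of an edge that keeps the multigraph connected lowers `size m` by one and
destroys this degree condition for at most one `f ∈ M`, namely the one meeting the ends of that
edge (an eardrum is induced); dropping that `f` from `M` does not increase `μ`. Induction thus
reduces the bound to a minimally connected `m`, i.e. a tree, for which `|V| - 1 ≤ size m`.

For a tree, root it at some `r ∉ V_M` and let `d` be the distance from `r`. Every `f ∈ M` gets a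
path through it climbing away from the root: parent–`u`–child for `f = {u}`; child–`a`–`b`–parent
if `f = {a, b}` with `ab` a tree edge and `b` below `a`; and child–`u`–`v`–child through an edge
`uv` of `G` otherwise. At every vertex at most one chosen edge descends, so the edges form a
forest and `μ(G, M) = |M|`.
-/

namespace MGraph

variable {V E : Type} {G : MGraph V E} {m : E → ℕ}

def supportGraph (G : MGraph V E) (m : E → ℕ) : SimpleGraph V where
  Adj a b := ∃ e, 1 ≤ m e ∧ G.ends e = s(a, b)
  symm := ⟨fun _ _ ⟨e, h1, h2⟩ => ⟨e, h1, h2.trans Sym2.eq_swap⟩⟩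
  loopless := ⟨fun _ ⟨e, _, h2⟩ => G.not_loop e (h2 ▸ Sym2.mk_isDiag_iff.2 rfl)⟩

theorem reach_iff_reachable {u v : V} : G.Reach m u v ↔ (G.supportGraph m).Reachable u v :=
  ((G.supportGraph m).reachable_iff_reflTransGen u v).symm

theorem Conn.connected [Nonempty V] (h : G.Conn m) : (G.supportGraph m).Connected :=
  ⟨fun u v => reach_iff_reachable.1 (h u v)⟩

theorem card_le_size_add_one [Fintype V] [Fintype E] (h : G.Conn m) :
    Fintype.card V ≤ size m + 1 := by
  cases isEmpty_or_nonempty V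
  · simp
  have hE : Nat.card (G.supportGraph m).edgeSet ≤ (univ.filter fun e => 1 ≤ m e).card := by
    have : (G.supportGraph m).edgeSet = G.ends '' ↑(univ.filter fun e => 1 ≤ m e) := by
      ext ⟨a, b⟩
      simp [supportGraph, eq_comm]
    rw [this, ← Set.ncard_coe_finset]
    exact Nat.card_image_le (Finset.finite_toSet _)
  have hsize : (univ.filter fun e => 1 ≤ m e).card ≤ size m := by
    rw [card_eq_sum_ones, size]
    exact (sum_le_sum fun e he => (mem_filter.1 he).2).trans
      (sum_le_sum_of_subset (filter_subset _ _))
  have := h.connected.card_vert_le_card_edgeSet_add_one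
  rw [Nat.card_eq_fintype_card] at this
  omega

theorem Reach.symm {u v : V} (h : G.Reach m u v) : G.Reach m v u :=
  reach_iff_reachable.2 (reach_iff_reachable.1 h).symm

theorem Conn.of_adj_reach {m' : E → ℕ} (h : G.Conn m)
    (hadj : ∀ a b, (G.supportGraph m).Adj a b → G.Reach m' a b) : G.Conn m' := fun u v =>
  (h u v).lift' id hadj

theorem ne_of_ends_eq {e : E} {a b : V} (h : G.ends e = s(a, b)) : a ≠ b := fun hab =>
  G.not_loop e (h ▸ Sym2.mk_isDiag_iff.2 hab)

theorem reach_of_notMem_support {m' : E → ℕ} {w x y : V}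
    (hm' : ∀ e, 1 ≤ m e → w ∉ G.ends e → 1 ≤ m' e) (p : (G.supportGraph m).Walk x y)
    (hw : w ∉ p.support) : G.Reach m' x y := by
  induction p with
  | nil => exact .refl
  | cons hadj q ih =>
    rw [SimpleGraph.Walk.support_cons, List.mem_cons, not_or] at hw
    obtain ⟨e, he, hends⟩ := hadj
    refine .head ⟨e, hm' e he ?_, hends⟩ (ih hw.2)
    rw [hends, Sym2.mem_iff, not_or]
    exact ⟨hw.1, fun h => hw.2 (h ▸ q.start_mem_support)⟩

theorem _root_.SimpleGraph.Connected.exists_walk_notMem_support {H : SimpleGraph V}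
    (hH : H.Connected) {r z w : V} (hzw : H.dist r z ≤ H.dist r w) (hne : w ≠ z) :
    ∃ p : H.Walk r z, w ∉ p.support := by
  obtain ⟨p, hp⟩ := hH.exists_walk_length_eq_dist r z
  refine ⟨p, fun hw => hne ?_⟩
  have hlen := congrArg SimpleGraph.Walk.length (p.take_spec hw)
  rw [SimpleGraph.Walk.length_append] at hlen
  have := SimpleGraph.dist_le (p.takeUntil w hw)
  exact SimpleGraph.Walk.eq_of_length_eq_zero (p := p.dropUntil w hw) (by omega)

theorem exists_parent (h : G.Conn m) {r v : V} (hv : v ≠ r) :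
    ∃ p e, 1 ≤ m e ∧ G.ends e = s(v, p) ∧
      (G.supportGraph m).dist r p < (G.supportGraph m).dist r v := by
  obtain ⟨q, hq⟩ := (reach_iff_reachable.1 (h r v)).exists_walk_length_eq_dist
  obtain ⟨p, hadj, q', hq'⟩ := SimpleGraph.Walk.exists_eq_cons_of_ne hv q.reverse
  have hlen := congrArg SimpleGraph.Walk.length hq'
  rw [SimpleGraph.Walk.length_reverse, SimpleGraph.Walk.length_cons] at hlen
  obtain ⟨e, he, hends⟩ := hadj
  have := SimpleGraph.dist_le q'.reverse
  rw [SimpleGraph.Walk.length_reverse] at this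
  exact ⟨p, e, he, hends, by omega⟩

def UniqueDescent (G : MGraph V E) (A : Set E) (d : V → ℕ) : Prop :=
  ∀ e₁ ∈ A, ∀ e₂ ∈ A, ∀ w z₁ z₂, G.ends e₁ = s(w, z₁) → G.ends e₂ = s(w, z₂) →
    d z₁ ≤ d w → d z₂ ≤ d w → e₁ = e₂

theorem isForest_of_uniqueDescent [Fintype V] [DecidableEq V] {A : Finset E} {d : V → ℕ}
    (h : G.UniqueDescent A d) : G.IsForest A := by
  intro B hB ⟨e₀, he₀⟩
  set W := univ.filter fun v => ∃ e ∈ B, v ∈ G.ends e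
  have hW : ∀ {e v}, e ∈ B → v ∈ G.ends e → v ∈ W := fun he hv =>
    mem_filter.2 ⟨mem_univ _, _, he, hv⟩
  obtain ⟨w, hwW, hwmax⟩ := W.exists_max_image d ⟨_, hW he₀ (Sym2.out_fst_mem _)⟩
  obtain ⟨ew, hewB, hwew⟩ := (mem_filter.1 hwW).2
  refine ⟨w, card_eq_one.2 ⟨ew, eq_singleton_iff_unique_mem.2 ⟨mem_filter.2 ⟨hewB, hwew⟩, ?_⟩⟩⟩
  intro e he
  obtain ⟨heB, hwe⟩ := mem_filter.1 he
  obtain ⟨z, hz⟩ := Sym2.mem_iff_exists.1 hwe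
  obtain ⟨zw, hzw⟩ := Sym2.mem_iff_exists.1 hwew
  exact h e (hB heB) ew (hB hewB) w z zw hz hzw (hwmax z (hW heB (hz ▸ Sym2.mem_mk_right w z)))
    (hwmax zw (hW hewB (hzw ▸ Sym2.mem_mk_right w zw)))

def IsMinConn [DecidableEq E] (G : MGraph V E) (m : E → ℕ) : Prop :=
  G.Conn m ∧ ∀ e, 1 ≤ m e → ¬ G.Conn (Function.update m e (m e - 1))

theorem IsMinConn.le_one [DecidableEq E] (h : G.IsMinConn m) (e : E) : m e ≤ 1 := by
  by_contra! h2
  refine h.2 e (by omega) (h.1.of_adj_reach fun a b ⟨e', he', hends⟩ => .single ⟨e', ?_, hends⟩)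
  rcases eq_or_ne e' e with rfl | hne
  · rw [Function.update_self]; omega
  · rwa [Function.update_of_ne hne]

theorem IsMinConn.uniqueDescent [DecidableEq E] (h : G.IsMinConn m) (r : V) :
    G.UniqueDescent {e | 1 ≤ m e} ((G.supportGraph m).dist r) := by
  intro e₁ he₁ e₂ he₂ w z₁ z₂ h₁ h₂ hd₁ hd₂
  by_contra hne
  have : Nonempty V := ⟨w⟩
  have hm' : ∀ e, 1 ≤ m e → e ≠ e₁ → 1 ≤ Function.update m e₁ (m e₁ - 1) e := fun e he hne => by
    rwa [Function.update_of_ne hne]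
  have hreach : ∀ {z}, (G.supportGraph m).dist r z ≤ (G.supportGraph m).dist r w → w ≠ z →
      G.Reach (Function.update m e₁ (m e₁ - 1)) r z := fun hd hwz => by
    obtain ⟨p, hp⟩ := h.1.connected.exists_walk_notMem_support hd hwz
    refine reach_of_notMem_support (fun e he hw => hm' e he ?_) p hp
    rintro rfl
    exact hw (h₁ ▸ Sym2.mem_mk_left w z₁)
  -- Shortest walks to `z₁` and `z₂` avoid `w`, so both ends of the removed copy `e₁` stay
  -- reachable from `r`: `w` through `z₂` and `e₂`.
  have hr₁ : G.Reach (Function.update m e₁ (m e₁ - 1)) r z₁ := hreach hd₁ (ne_of_ends_eq h₁)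
  have hrw : G.Reach (Function.update m e₁ (m e₁ - 1)) r w := (hreach hd₂ (ne_of_ends_eq h₂)).tail
    ⟨e₂, hm' e₂ he₂ (Ne.symm hne), h₂.trans Sym2.eq_swap⟩
  refine h.2 e₁ he₁ (h.1.of_adj_reach fun a b ⟨e, he, hends⟩ => ?_)
  by_cases hee : e = e₁
  · rw [hee, h₁] at hends
    rcases Sym2.eq_iff.1 hends with ⟨rfl, rfl⟩ | ⟨rfl, rfl⟩
    · exact hrw.symm.trans hr₁
    · exact hr₁.symm.trans hrw
  · exact .single ⟨e, hm' e he hee, hends⟩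

theorem one_lt_card_filter_of_two_le_deg [Fintype E] [DecidableEq V] {u : V}
    (hle : ∀ e, m e ≤ 1) (hu : 2 ≤ G.deg m u) :
    1 < (univ.filter fun e => 1 ≤ m e ∧ u ∈ G.ends e).card := by
  rw [card_filter]
  unfold deg at hu
  refine (one_lt_two.trans_le hu).trans_le (sum_le_sum fun e _ => ?_)
  split_ifs <;> grind

theorem IsMinConn.exists_child [Fintype E] [DecidableEq V] [DecidableEq E] (h : G.IsMinConn m)
    (r : V) {u : V} (hu : 2 ≤ G.deg m u) :
    ∃ c e, 1 ≤ m e ∧ G.ends e = s(u, c) ∧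
      (G.supportGraph m).dist r u < (G.supportGraph m).dist r c := by
  obtain ⟨e₁, e₂, h₁, h₂, hne⟩ := one_lt_card_iff.1 (one_lt_card_filter_of_two_le_deg h.le_one hu)
  simp only [mem_filter, mem_univ, true_and] at h₁ h₂
  obtain ⟨z₁, hz₁⟩ := Sym2.mem_iff_exists.1 h₁.2
  obtain ⟨z₂, hz₂⟩ := Sym2.mem_iff_exists.1 h₂.2
  by_contra! hdown
  exact hne (h.uniqueDescent r e₁ h₁.1 e₂ h₂.1 u z₁ z₂ hz₁ hz₂
    (hdown z₁ e₁ h₁.1 hz₁) (hdown z₂ e₂ h₂.1 hz₂))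

section Eardrum

variable [DecidableEq V] {M : Finset (Finset V)} {f g : Finset V} {u v x : V} {e : E}

theorem mem_VM_iff : v ∈ VM M ↔ ∃ f ∈ M, v ∈ f := by
  simp [VM]

theorem mem_VM_of_mem (hf : f ∈ M) (hv : v ∈ f) : v ∈ VM M :=
  mem_VM_iff.2 ⟨f, hf, hv⟩

theorem IsEardrum.eq_of_mem (hM : G.IsEardrum M) (hf : f ∈ M) (hg : g ∈ M) (hvf : v ∈ f)
    (hvg : v ∈ g) : f = g := by
  by_contra h
  exact disjoint_left.1 (hM.1 f hf g hg h) hvf hvg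

theorem IsEardrum.nonempty (hM : G.IsEardrum M) (hf : f ∈ M) : f.Nonempty := by
  rw [← card_pos]
  rcases hM.2.1 f hf with h | h <;> omega

theorem IsEardrum.exists_superset_ends (hM : G.IsEardrum M) (hf : f ∈ M) (hg : g ∈ M)
    (hu : u ∈ f) (hv : v ∈ g) (he : G.ends e = s(u, v)) : ∃ h ∈ M, u ∈ h ∧ v ∈ h := by
  obtain ⟨h, hh, hsub⟩ := hM.2.2.2 e fun y hy => by
    rw [he, Sym2.mem_iff] at hy
    rcases hy with rfl | rfl
    exacts [mem_VM_of_mem hf hu, mem_VM_of_mem hg hv]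
  exact ⟨h, hh, hsub u (he ▸ Sym2.mem_mk_left u v), hsub v (he ▸ Sym2.mem_mk_right u v)⟩

theorem IsEardrum.mem_or_notMem_VM (hM : G.IsEardrum M) (hf : f ∈ M) (hu : u ∈ f)
    (he : G.ends e = s(u, x)) : x ∈ f ∨ x ∉ VM M := by
  refine or_iff_not_imp_right.2 fun hx => ?_
  obtain ⟨g, hg, hxg⟩ := mem_VM_iff.1 (not_not.1 hx)
  obtain ⟨h, hh, huh, hxh⟩ := hM.exists_superset_ends hf hg hu hxg he
  exact hM.eq_of_mem hf hh hu huh ▸ hxh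

theorem IsEardrum.subset (hM : G.IsEardrum M) {M' : Finset (Finset V)} (hM' : M' ⊆ M) :
    G.IsEardrum M' := by
  refine ⟨fun f hf g hg => hM.1 f (hM' hf) g (hM' hg), fun f hf => hM.2.1 f (hM' hf),
    fun f hf => hM.2.2.1 f (hM' hf), fun e he => ?_⟩
  obtain ⟨f, hf, hsub⟩ := hM.2.2.2 e fun x hx => by
    obtain ⟨g, hg, hxg⟩ := mem_VM_iff.1 (he x hx)
    exact mem_VM_of_mem (hM' hg) hxg
  obtain ⟨g, hg, hxg⟩ := mem_VM_iff.1 (he _ (Sym2.out_fst_mem (G.ends e)))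
  exact ⟨f, hM.eq_of_mem (hM' hg) hf hxg (hsub _ (Sym2.out_fst_mem _)) ▸ hg, hsub⟩

theorem IsEardrum.card_filter_meets_le_one (hM : G.IsEardrum M) (e : E) :
    (M.filter fun f => ∃ v ∈ f, v ∈ G.ends e).card ≤ 1 := by
  refine card_le_one.2 fun f hf g hg => ?_
  obtain ⟨hfM, u, huf, hue⟩ := mem_filter.1 hf
  obtain ⟨hgM, v, hvg, hve⟩ := mem_filter.1 hg
  obtain rfl | huv := eq_or_ne u v
  · exact hM.eq_of_mem hfM hgM huf hvg
  obtain ⟨h, hh, huh, hvh⟩ :=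
    hM.exists_superset_ends hfM hgM huf hvg ((Sym2.mem_and_mem_iff huv).1 ⟨hue, hve⟩)
  exact (hM.eq_of_mem hfM hh huf huh).trans (hM.eq_of_mem hgM hh hvg hvh).symm

theorem IsEardrum.card_le_card_filter_add_one (hM : G.IsEardrum M) (e : E)
    {p : Finset V → Prop} [DecidablePred p] (hp : ∀ f ∈ M, ¬ p f → ∃ v ∈ f, v ∈ G.ends e) :
    M.card ≤ (M.filter p).card + 1 := by
  rw [← card_filter_add_card_filter_not (s := M) p]
  refine Nat.add_le_add_left ((card_le_card fun f hf => ?_).trans (hM.card_filter_meets_le_one e)) _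
  obtain ⟨hfM, hpf⟩ := mem_filter.1 hf
  exact mem_filter.2 ⟨hfM, hp f hfM hpf⟩

theorem IsEardrum.mem_of_reach (hM : G.IsEardrum M) (hall : ∀ x, x ∈ VM M) (hf : f ∈ M)
    (hu : u ∈ f) (h : G.Reach m u v) : v ∈ f := by
  induction h with
  | refl => exact hu
  | tail _ hstep ih =>
    obtain ⟨e, -, he⟩ := hstep
    obtain ⟨g, hg, hcg⟩ := mem_VM_iff.1 (hall _)
    obtain ⟨h, hh, hbh, hch⟩ := hM.exists_superset_ends hf hg ih hcg he
    exact hM.eq_of_mem hf hh ih hbh ▸ hch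

theorem IsPathInn.card_add_two_le [Fintype V] {P : Ear V E} (hP : G.IsPathInn f P)
    (hf : f.Nonempty) : f.card + 2 ≤ Fintype.card V := by
  obtain ⟨-, hnodup, -, -, rfl⟩ := hP
  have hinn : (innFinset P).card ≤ P.1.length - 2 := by
    have : (innList P).length = P.1.length - 2 := by simp [innList]; omega
    exact this ▸ List.toFinset_card_le _
  have := hnodup.length_le_card
  have := hf.card_pos
  omega

theorem exists_notMem_VM [Fintype V] (hconn : G.Conn m) (hM : G.IsEardrum M)
    (hP : ∀ f ∈ M, ∃ P : Ear V E, G.IsPathInn f P) (hf : f ∈ M) : ∃ r, r ∉ VM M := by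
  -- Otherwise connectivity forces `V ⊆ f`, but `f` misses the two ends of a path.
  by_contra! hall
  obtain ⟨v, hv⟩ := hM.nonempty hf
  obtain ⟨P, hPf⟩ := hP f hf
  have hcard := hPf.card_add_two_le ⟨v, hv⟩
  have : univ ⊆ f := fun u _ => hM.mem_of_reach hall hf hv (hconn v u)
  have := card_le_card this
  rw [card_univ] at this
  omega

end Eardrum

section Degree

variable [Fintype E] [DecidableEq V] {u v : V} {e : E}

theorem one_le_deg_of_reach (h : G.Reach m u v) (huv : u ≠ v) : 1 ≤ G.deg m u := by
  obtain ⟨e, he, hue⟩ : ∃ e, 1 ≤ m e ∧ u ∈ G.ends e := by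
    rcases h.cases_head with rfl | ⟨c, ⟨e, he, hends⟩, -⟩
    · exact absurd rfl huv
    · exact ⟨e, he, hends ▸ Sym2.mem_mk_left u c⟩
  calc 1 ≤ if u ∈ G.ends e then m e else 0 := by rwa [if_pos hue]
    _ ≤ G.deg m u := single_le_sum (f := fun e => if u ∈ G.ends e then m e else 0)
        (fun _ _ => Nat.zero_le _) (mem_univ e)

theorem deg_update_of_notMem [DecidableEq E] (hv : v ∉ G.ends e) (k : ℕ) :
    G.deg (Function.update m e k) v = G.deg m v := by
  refine sum_congr rfl fun e' _ => ?_
  rcases eq_or_ne e' e with rfl | hne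
  · simp [hv]
  · rw [Function.update_of_ne hne]

end Degree

theorem size_update_add_one [Fintype E] [DecidableEq E] {e : E} (he : 1 ≤ m e) :
    size (Function.update m e (m e - 1)) + 1 = size m := by
  rw [size, size, sum_update_of_mem (mem_univ e),
    sum_eq_add_sum_sdiff_singleton_of_mem (mem_univ e)]
  omega

section Earmuff

variable [DecidableEq V] [DecidableEq E] {M : Finset (Finset V)}

theorem IsEarmuff.card_le_mu {F : Finset (Finset V)} {P : Finset V → Ear V E}
    (h : G.IsEarmuff M F P) : F.card ≤ G.mu M :=
  le_csSup ⟨M.card, fun _ ⟨_, _, hE, hk⟩ => hk ▸ card_le_card hE.1⟩ ⟨F, P, h, rfl⟩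

theorem mu_mono {M' : Finset (Finset V)} (h : M' ⊆ M) : G.mu M' ≤ G.mu M := by
  refine csSup_le ⟨0, ∅, fun _ => ([], []), ⟨empty_subset _, by simp, ?_⟩, rfl⟩ ?_
  · intro B hB hne
    exact absurd (subset_empty.1 (by simpa using hB)) hne.ne_empty
  · rintro k ⟨F, P, ⟨hF, hP, hfor⟩, rfl⟩
    exact IsEarmuff.card_le_mu ⟨hF.trans h, hP, hfor⟩

end Earmuff

section Paths

variable [DecidableEq V]

theorem isPathInn_of_length_two {p u c : V} {e₁ e₂ : E} (hV : [p, u, c].Nodup)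
    (h₁ : G.ends e₁ = s(p, u)) (h₂ : G.ends e₂ = s(u, c)) :
    G.IsPathInn {u} ([p, u, c], [e₁, e₂]) := by
  refine ⟨rfl, hV, List.Nodup.of_map G.ends ?_, fun i hi => ?_, by simp [innFinset, innList]⟩
  · simp only [List.nodup_cons, List.mem_cons] at hV
    simp [h₁, h₂]
    tauto
  · match i, hi with
    | 0, _ => exact ⟨p, u, rfl, rfl, h₁⟩
    | 1, _ => exact ⟨u, c, rfl, rfl, h₂⟩

theorem isPathInn_of_length_three {x u v y : V} {e₁ e₂ e₃ : E} (hV : [x, u, v, y].Nodup)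
    (h₁ : G.ends e₁ = s(x, u)) (h₂ : G.ends e₂ = s(u, v)) (h₃ : G.ends e₃ = s(v, y)) :
    G.IsPathInn {u, v} ([x, u, v, y], [e₁, e₂, e₃]) := by
  refine ⟨rfl, hV, List.Nodup.of_map G.ends ?_, fun i hi => ?_, by simp [innFinset, innList]⟩
  · simp only [List.nodup_cons, List.mem_cons] at hV
    simp [h₁, h₂, h₃]
    tauto
  · match i, hi with
    | 0, _ => exact ⟨x, u, rfl, rfl, h₁⟩
    | 1, _ => exact ⟨u, v, rfl, rfl, h₂⟩
    | 2, _ => exact ⟨v, y, rfl, rfl, h₃⟩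

end Paths

theorem eq_of_descends {d : V → ℕ} {e : E} {x y w z : V} (he : G.ends e = s(x, y)) (hxy : d x < d y)
    (h : G.ends e = s(w, z)) (hzw : d z ≤ d w) : w = y := by
  rcases Sym2.eq_iff.1 (he.symm.trans h) with ⟨rfl, rfl⟩ | ⟨rfl, rfl⟩
  · omega
  · rfl

section Tame

variable [DecidableEq V] {M : Finset (Finset V)} {d : V → ℕ} {f : Finset V}

/-- The invariant of the chosen earmuff paths that makes their union a forest. -/
def TameDescent (G : MGraph V E) (m : E → ℕ) (M : Finset (Finset V)) (d : V → ℕ)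
    (f : Finset V) (Q : Ear V E) : Prop :=
  ∀ e ∈ Q.2, ∀ w z, G.ends e = s(w, z) → d z ≤ d w →
    (1 ≤ m e ∧ (w ∈ f ∨ w ∉ VM M)) ∨
    (w ∈ f ∧ ∀ e' ∈ Q.2, ∀ z', G.ends e' = s(w, z') → d z' ≤ d w → e' = e)

theorem uniqueDescent_biUnion [DecidableEq E] (hM : G.IsEardrum M)
    (hU : G.UniqueDescent {e | 1 ≤ m e} d) {Q : Finset V → Ear V E}
    (hQ : ∀ f ∈ M, G.TameDescent m M d f (Q f)) :
    G.UniqueDescent ↑(M.biUnion fun f => (Q f).2.toFinset) d := by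
  intro e₁ he₁ e₂ he₂ w z₁ z₂ h₁ h₂ hd₁ hd₂
  simp only [coe_biUnion, Set.mem_iUnion, mem_coe, List.mem_toFinset] at he₁ he₂
  obtain ⟨f₁, hf₁, he₁⟩ := he₁
  obtain ⟨f₂, hf₂, he₂⟩ := he₂
  have t₁ := hQ f₁ hf₁ e₁ he₁ w z₁ h₁ hd₁
  have t₂ := hQ f₂ hf₂ e₂ he₂ w z₂ h₂ hd₂
  by_cases hw : w ∈ VM M
  · have hw₁ : w ∈ f₁ := by rcases t₁ with ⟨-, h | h⟩ | ⟨h, -⟩ <;> tauto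
    have hw₂ : w ∈ f₂ := by rcases t₂ with ⟨-, h | h⟩ | ⟨h, -⟩ <;> tauto
    obtain rfl := hM.eq_of_mem hf₁ hf₂ hw₁ hw₂
    rcases t₁ with ⟨hm₁, -⟩ | ⟨-, hu₁⟩
    · rcases t₂ with ⟨hm₂, -⟩ | ⟨-, hu₂⟩
      · exact hU e₁ hm₁ e₂ hm₂ w z₁ z₂ h₁ h₂ hd₁ hd₂
      · exact hu₂ e₁ he₁ z₁ h₁ hd₁
    · exact (hu₁ e₂ he₂ z₂ h₂ hd₂).symm
  · have hm₁ : 1 ≤ m e₁ := t₁.elim And.left fun h => absurd (mem_VM_of_mem hf₁ h.1) hw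
    have hm₂ : 1 ≤ m e₂ := t₂.elim And.left fun h => absurd (mem_VM_of_mem hf₂ h.1) hw
    exact hU e₁ hm₁ e₂ hm₂ w z₁ z₂ h₁ h₂ hd₁ hd₂

theorem tameDescent_of_rising {Q : Ear V E}
    (h : ∀ e ∈ Q.2, 1 ≤ m e ∧ ∃ x y, G.ends e = s(x, y) ∧ d x < d y ∧ (y ∈ f ∨ y ∉ VM M)) :
    G.TameDescent m M d f Q := fun e he _ _ hwz hd =>
  let ⟨hm, _, _, hxy, hlt, hy⟩ := h e he
  .inl ⟨hm, eq_of_descends hxy hlt hwz hd ▸ hy⟩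

theorem exists_tame_path_singleton (hM : G.IsEardrum M) {u p c : V} {ep ec : E}
    (hu : {u} ∈ M) (hmp : 1 ≤ m ep) (hep : G.ends ep = s(p, u)) (hdp : d p < d u)
    (hmc : 1 ≤ m ec) (hec : G.ends ec = s(u, c)) (hdc : d u < d c) :
    ∃ Q, G.IsPathInn {u} Q ∧ G.TameDescent m M d {u} Q := by
  refine ⟨_, isPathInn_of_length_two (List.Nodup.of_map d ?_) hep hec,
    tameDescent_of_rising ?_⟩
  · simp; omega
  · simp only [List.mem_cons, List.not_mem_nil, or_false]
    rintro e (rfl | rfl)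
    · exact ⟨hmp, p, u, hep, hdp, .inl (mem_singleton_self u)⟩
    · exact ⟨hmc, u, c, hec, hdc, hM.mem_or_notMem_VM hu (mem_singleton_self u) hec⟩

theorem exists_tame_path_of_adj (hM : G.IsEardrum M) {a b c p : V} {ec e ep : E}
    (hab : {a, b} ∈ M) (hmc : 1 ≤ m ec) (hec : G.ends ec = s(a, c)) (hdc : d a < d c)
    (hme : 1 ≤ m e) (he : G.ends e = s(a, b)) (hd : d b < d a)
    (hmp : 1 ≤ m ep) (hep : G.ends ep = s(b, p)) (hdp : d p < d b) :
    ∃ Q, G.IsPathInn {a, b} Q ∧ G.TameDescent m M d {a, b} Q := by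
  have ha : a ∈ ({a, b} : Finset V) := mem_insert_self a {b}
  have hb : b ∈ ({a, b} : Finset V) := mem_insert_of_mem (mem_singleton_self b)
  refine ⟨_, isPathInn_of_length_three (List.Nodup.of_map d ?_) (hec.trans Sym2.eq_swap) he
    hep, tameDescent_of_rising ?_⟩
  · simp; omega
  · simp only [List.mem_cons, List.not_mem_nil, or_false]
    rintro e (rfl | rfl | rfl)
    · exact ⟨hmc, a, c, hec, hdc, hM.mem_or_notMem_VM hab ha hec⟩
    · exact ⟨hme, b, a, he.trans Sym2.eq_swap, hd, .inl ha⟩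
    · exact ⟨hmp, p, b, hep.trans Sym2.eq_swap, hdp, .inl hb⟩


theorem exists_tame_path_of_not_adj (hM : G.IsEardrum M) (hU : G.UniqueDescent {e | 1 ≤ m e} d)
    {u v cu cv : V} {ecu e ecv : E} (huv : {u, v} ∈ M)
    (hnadj : ¬ ∃ e, 1 ≤ m e ∧ G.ends e = s(u, v)) (he : G.ends e = s(u, v))
    (hmu : 1 ≤ m ecu) (hecu : G.ends ecu = s(u, cu)) (hdu : d u < d cu)
    (hmv : 1 ≤ m ecv) (hecv : G.ends ecv = s(v, cv)) (hdv : d v < d cv) :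
    ∃ Q, G.IsPathInn {u, v} Q ∧ G.TameDescent m M d {u, v} Q := by
  have hu : u ∈ ({u, v} : Finset V) := mem_insert_self u {v}
  have hv : v ∈ ({u, v} : Finset V) := mem_insert_of_mem (mem_singleton_self v)
  have hcu : cu ∉ ({u, v} : Finset V) := by
    simp only [mem_insert, mem_singleton, not_or]
    refine ⟨by rintro rfl; omega, ?_⟩
    rintro rfl
    exact hnadj ⟨ecu, hmu, hecu⟩
  have hcv : cv ∉ ({u, v} : Finset V) := by
    simp only [mem_insert, mem_singleton, not_or]
    refine ⟨?_, by rintro rfl; omega⟩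
    rintro rfl
    exact hnadj ⟨ecv, hmv, hecv.trans Sym2.eq_swap⟩
  -- `cu = cv` would give two edges of `m` descending from it.
  have hcucv : cu ≠ cv := by
    rintro rfl
    obtain rfl := hU ecu hmu ecv hmv cu u v (hecu.trans Sym2.eq_swap)
      (hecv.trans Sym2.eq_swap) hdu.le hdv.le
    exact ne_of_ends_eq he (Sym2.congr_left.1 (hecu.symm.trans hecv))
  have hV : [cu, u, v, cv].Nodup := by
    simp only [mem_insert, mem_singleton, not_or] at hcu hcv
    simp [hcu.1, hcu.2, hcucv, ne_of_ends_eq he, Ne.symm hcv.1, Ne.symm hcv.2]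
  refine ⟨_, isPathInn_of_length_three hV (hecu.trans Sym2.eq_swap) he hecv, ?_⟩
  simp only [TameDescent, List.mem_cons, List.not_mem_nil, or_false]
  rintro e' (rfl | rfl | rfl) w z hwz hzw
  · exact .inl ⟨hmu, eq_of_descends hecu hdu hwz hzw ▸ hM.mem_or_notMem_VM huv hu hecu⟩
  · have hw : w ∈ ({u, v} : Finset V) := by
      rcases Sym2.eq_iff.1 (he.symm.trans hwz) with ⟨rfl, -⟩ | ⟨-, rfl⟩
      exacts [hu, hv]
    refine .inr ⟨hw, ?_⟩
    rintro e'' (rfl | rfl | rfl) z' hwz' hzw'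
    · exact absurd (eq_of_descends hecu hdu hwz' hzw' ▸ hw) hcu
    · rfl
    · exact absurd (eq_of_descends hecv hdv hwz' hzw' ▸ hw) hcv
  · exact .inl ⟨hmv, eq_of_descends hecv hdv hwz hzw ▸ hM.mem_or_notMem_VM huv hv hecv⟩

theorem exists_tame_path (hM : G.IsEardrum M) (hU : G.UniqueDescent {e | 1 ≤ m e} d)
    (hpar : ∀ v ∈ VM M, ∃ p e, 1 ≤ m e ∧ G.ends e = s(v, p) ∧ d p < d v)
    (hchild : ∀ v ∈ VM M, ∃ c e, 1 ≤ m e ∧ G.ends e = s(v, c) ∧ d v < d c) (hf : f ∈ M) :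
    ∃ Q, G.IsPathInn f Q ∧ G.TameDescent m M d f Q := by
  rcases hM.2.1 f hf with hcard | hcard
  · obtain ⟨u, rfl⟩ := card_eq_one.1 hcard
    have hu := mem_VM_of_mem hf (mem_singleton_self u)
    obtain ⟨p, ep, hmp, hep, hdp⟩ := hpar u hu
    obtain ⟨c, ec, hmc, hec, hdc⟩ := hchild u hu
    exact exists_tame_path_singleton hM hf hmp (hep.trans Sym2.eq_swap) hdp hmc hec hdc
  obtain ⟨u, v, huv, rfl⟩ := card_eq_two.1 hcard
  have hu := mem_VM_of_mem hf (mem_insert_self u {v})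
  have hv := mem_VM_of_mem hf (mem_insert_of_mem (mem_singleton_self v))
  obtain ⟨cu, ecu, hmcu, hecu, hdcu⟩ := hchild u hu
  obtain ⟨cv, ecv, hmcv, hecv, hdcv⟩ := hchild v hv
  obtain ⟨pu, epu, hmpu, hepu, hdpu⟩ := hpar u hu
  obtain ⟨pv, epv, hmpv, hepv, hdpv⟩ := hpar v hv
  by_cases hadj : ∃ e, 1 ≤ m e ∧ G.ends e = s(u, v)
  · obtain ⟨e, hme, he⟩ := hadj
    -- Otherwise `e` and the edge to the parent of `u` would both descend from `u`.
    have hne : d u ≠ d v := fun h => by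
      obtain rfl := hU e hme epu hmpu u v pu he hepu h.ge hdpu.le
      exact (Sym2.congr_right.1 (he.symm.trans hepu) ▸ hdpu).ne' h
    rcases lt_or_gt_of_ne hne with h | h
    · rw [pair_comm] at hf ⊢
      exact exists_tame_path_of_adj hM hf hmcv hecv hdcv hme (he.trans Sym2.eq_swap) h
        hmpu hepu hdpu
    · exact exists_tame_path_of_adj hM hf hmcu hecu hdcu hme he h hmpv hepv hdpv
  · obtain ⟨e, he⟩ := hM.2.2.1 _ hf u (mem_insert_self u {v}) v
      (mem_insert_of_mem (mem_singleton_self v)) huv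
    exact exists_tame_path_of_not_adj hM hU hf hadj he hmcu hecu hdcu hmcv hecv hdcv

end Tame

theorem IsMinConn.card_le_mu [Fintype V] [Fintype E] [DecidableEq V] [DecidableEq E]
    {M : Finset (Finset V)} (h : G.IsMinConn m) (hM : G.IsEardrum M)
    (hP : ∀ f ∈ M, ∃ P : Ear V E, G.IsPathInn f P) (hdeg : ∀ v ∈ VM M, 2 ≤ G.deg m v) :
    M.card ≤ G.mu M := by
  obtain rfl | ⟨f, hf⟩ := M.eq_empty_or_nonempty
  · simp
  obtain ⟨r, hr⟩ := exists_notMem_VM h.1 hM hP hf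
  have hpath : ∀ f ∈ M, ∃ Q, G.IsPathInn f Q ∧
      G.TameDescent m M ((G.supportGraph m).dist r) f Q := fun f hf =>
    exists_tame_path hM (h.uniqueDescent r)
      (fun v hv => exists_parent h.1 (ne_of_mem_of_not_mem hv hr))
      (fun v hv => h.exists_child r (hdeg v hv)) hf
  choose! Q hQ using hpath
  exact IsEarmuff.card_le_mu ⟨Subset.rfl, fun f hf => (hQ f hf).1, isForest_of_uniqueDescent
    (uniqueDescent_biUnion hM (h.uniqueDescent r) fun f hf => (hQ f hf).2)⟩

theorem card_add_card_le_of_two_le_deg [Fintype V] [Fintype E] [DecidableEq V] [DecidableEq E]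
    {M : Finset (Finset V)} (hconn : G.Conn m) (hM : G.IsEardrum M)
    (hP : ∀ f ∈ M, ∃ P : Ear V E, G.IsPathInn f P) (hdeg : ∀ v ∈ VM M, 2 ≤ G.deg m v) :
    Fintype.card V + M.card ≤ size m + G.mu M + 1 := by
  induction hs : size m using Nat.strong_induction_on generalizing m M with
  | _ n ih =>
    by_cases hmin : G.IsMinConn m
    · have := card_le_size_add_one hconn
      have := hmin.card_le_mu hM hP hdeg
      omega
    obtain ⟨e, he, hconn'⟩ : ∃ e, 1 ≤ m e ∧ G.Conn (Function.update m e (m e - 1)) := by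
      simpa [IsMinConn, hconn] using hmin
    set m' := Function.update m e (m e - 1)
    set M' := M.filter fun f => ∀ v ∈ f, 2 ≤ G.deg m' v
    have hM' : M' ⊆ M := filter_subset _ _
    have hsize : size m' + 1 = size m := size_update_add_one he
    -- Only the element of `M` meeting an end of `e` can lose a degree.
    have hcard : M.card ≤ M'.card + 1 := hM.card_le_card_filter_add_one e fun f hf hlow => by
      obtain ⟨v, hvf, hv⟩ := not_forall₂.1 hlow
      refine ⟨v, hvf, by_contra fun hve => ?_⟩
      have := hdeg v (mem_VM_of_mem hf hvf)
      rw [deg_update_of_notMem hve] at hv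
      omega
    have hdeg' : ∀ v ∈ VM M', 2 ≤ G.deg m' v := fun v hv => by
      obtain ⟨f, hf, hvf⟩ := mem_VM_iff.1 hv
      exact (mem_filter.1 hf).2 v hvf
    have := ih (size m') (by omega) hconn' (hM.subset hM') (fun f hf => hP f (hM' hf)) hdeg' rfl
    have := mu_mono (G := G) hM'
    omega

theorem _root_.Graph.stmt_16 {V E : Type} [Fintype V] [Fintype E] [DecidableEq V] [DecidableEq E]
    (G : MGraph V E) (hG : G.Connected)
    (T : Finset V) (hT : Even T.card)
    (M : Finset (Finset V)) (hM : G.IsEardrum M)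
    (hMT : Disjoint (VM M) T)
    (hP : ∀ f ∈ M, ∃ P : Ear V E, G.IsPathInn f P)
    (m : E → ℕ) (hm : G.IsConnTJoin T m) :
    Fintype.card V + M.card ≤ size m + G.mu M + 1 := by
  obtain ⟨-, hconn, hodd⟩ := hm
  refine card_add_card_le_of_two_le_deg hconn hM hP fun v hv => ?_
  obtain ⟨f, hf, -⟩ := mem_VM_iff.1 hv
  obtain ⟨r, hr⟩ := exists_notMem_VM hconn hM hP hf
  have hpos := one_le_deg_of_reach (hconn v r) (ne_of_mem_of_not_mem hv hr)
  obtain ⟨k, hk⟩ : Even (G.deg m v) :=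
    Nat.not_odd_iff_even.1 fun h => disjoint_left.1 hMT hv ((hodd v).2 h)
  omega

end MGraph
end
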